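/- arXiv:1803.07042 — 8 statements merged into one kernel-verified Lean document; each statement's English description precedes it below -/
import Mathlib

section
/- Let G be a graph on n vertices with adjacency matrix A and eigenvalues λ₁ ≥ ⋯ ≥ λₙ. Let p be a real polynomial of degree at most k, and let w(p) = min over vertices u of (p(A))_{uu}. Then the k-independence number α_k(G) (the maximum size of a set of vertices pairwise at distance greater than k) satisfies α_k(G) ≤ |{i : p(λᵢ) ≥ w(p)}|. -/
open Polynomial Matrix Finset
open scoped Classical
open scoped RealInnerProductSpace

lemma aux_sum_mulVec {n : ℕ} {ι : Type*} (t : Finset ι) (M : ι → Matrix (Fin n) (Fin n) ℝ)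
    (v : Fin n → ℝ) : (∑ i ∈ t, M i) *ᵥ v = ∑ i ∈ t, (M i) *ᵥ v := by
  classical
  induction t using Finset.induction_on with
  | empty => simp [Matrix.zero_mulVec]
  | insert a t h ih => simp [Finset.sum_insert h, Matrix.add_mulVec, ih]

lemma aux_pow_mulVec {n : ℕ} (A : Matrix (Fin n) (Fin n) ℝ) (v : Fin n → ℝ) (μ : ℝ)
    (h : A *ᵥ v = μ • v) (i : ℕ) : (A ^ i) *ᵥ v = μ ^ i • v := by
  induction i with
  | zero => simp
  | succ i ih =>
    rw [pow_succ, ← Matrix.mulVec_mulVec, h, Matrix.mulVec_smul, ih, smul_smul, pow_succ,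
      mul_comm]

lemma aux_aeval_mulVec {n : ℕ} (A : Matrix (Fin n) (Fin n) ℝ) (v : Fin n → ℝ) (μ : ℝ)
    (h : A *ᵥ v = μ • v) (p : Polynomial ℝ) :
    (Polynomial.aeval A p) *ᵥ v = p.eval μ • v := by
  rw [Polynomial.aeval_eq_sum_range, Polynomial.eval_eq_sum_range, aux_sum_mulVec,
    Finset.sum_smul]
  refine Finset.sum_congr rfl fun i _ => ?_
  rw [Matrix.smul_mulVec, aux_pow_mulVec A v μ h i, smul_smul]

lemma aux_zero_entry {n k : ℕ} (G : SimpleGraph (Fin n)) (p : Polynomial ℝ)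
    (hp : p.natDegree ≤ k) {u v : Fin n}
    (hwalk : ∀ w : G.Walk u v, k < w.length) :
    (Polynomial.aeval (G.adjMatrix ℝ) p) u v = 0 := by
  rw [Polynomial.aeval_eq_sum_range, Matrix.sum_apply]
  refine Finset.sum_eq_zero fun i hi => ?_
  have hi' : i ≤ k := le_trans (Nat.lt_succ_iff.mp (Finset.mem_range.mp hi)) hp
  have hcard : (G.adjMatrix ℝ ^ i) u v = 0 := by
    rw [SimpleGraph.adjMatrix_pow_apply_eq_card_walk]
    rw [show (0 : ℝ) = ((0 : ℕ) : ℝ) by norm_num]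
    congr 1
    rw [Fintype.card_eq_zero_iff]
    constructor
    rintro ⟨q, hq⟩
    have h1 := hwalk q
    have h2 : q.length = i := hq
    omega
  simp [Matrix.smul_apply, hcard]

noncomputable abbrev V' (n : ℕ) := EuclideanSpace ℝ (Fin n)

lemma aux_toEuclidean_eigen {n : ℕ} {A : Matrix (Fin n) (Fin n) ℝ} (hA : A.IsHermitian)
    (p : Polynomial ℝ) (j : Fin n) :
    Matrix.toEuclideanLin (Polynomial.aeval A p) (hA.eigenvectorBasis j)
      = p.eval (hA.eigenvalues j) • (hA.eigenvectorBasis j : V' n) := by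
  have h := aux_aeval_mulVec A (hA.eigenvectorBasis j) (hA.eigenvalues j)
    (hA.mulVec_eigenvectorBasis j) p
  exact congrArg (WithLp.equiv 2 (Fin n → ℝ)).symm h

lemma aux_inner_coord {n : ℕ} (x y : V' n) : ⟪x, y⟫ = ∑ i, x i * y i := by
  simp [PiLp.inner_apply, RCLike.inner_apply, conj_trivial]
  exact Finset.sum_congr rfl fun i _ => mul_comm _ _

lemma aux_inner_mulVec {n : ℕ} (B : Matrix (Fin n) (Fin n) ℝ) (x : V' n) :
    ⟪x, Matrix.toEuclideanLin B x⟫ = ∑ u, ∑ v, x u * B u v * x v := by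
  rw [aux_inner_coord]
  refine Finset.sum_congr rfl fun u _ => ?_
  have : (Matrix.toEuclideanLin B x) u = ∑ v, B u v * x v := rfl
  rw [this, Finset.mul_sum]
  exact Finset.sum_congr rfl fun v _ => by ring

/-- The `k`-independence number: maximum size of a set of vertices such that every
walk between two distinct vertices of the set has length greater than `k`
(equivalently, pairwise distance greater than `k`). -/
noncomputable def kIndepNum {n : ℕ} (G : SimpleGraph (Fin n)) (k : ℕ) : ℕ :=
  sSup {m | ∃ s : Finset (Fin n),
    (∀ u ∈ s, ∀ v ∈ s, u ≠ v → ∀ w : G.Walk u v, k < w.length) ∧ s.card = m}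

theorem stmt_0 {n k : ℕ} (G : SimpleGraph (Fin n))
    (hA : (G.adjMatrix ℝ).IsHermitian)
    (eig : Fin n → ℝ) (hmono : Antitone eig)
    (hperm : ∃ σ : Equiv.Perm (Fin n), eig = hA.eigenvalues ∘ σ)
    (p : Polynomial ℝ) (hp : p.natDegree ≤ k)
    (w : ℝ)
    (hw : IsLeast {x : ℝ | ∃ u : Fin n, x = (Polynomial.aeval (G.adjMatrix ℝ) p) u u} w) :
    kIndepNum G k ≤ (Finset.univ.filter (fun i : Fin n => w ≤ p.eval (eig i))).card := by
  classical
  obtain ⟨σ, hσ⟩ := hperm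
  have hcards : (univ.filter (fun i : Fin n => w ≤ p.eval (eig i))).card
      = (univ.filter (fun j : Fin n => w ≤ p.eval (hA.eigenvalues j))).card := by
    refine Finset.card_bij (fun i _ => σ i) ?_ ?_ ?_
    · intro i hi
      simp only [mem_filter, mem_univ, true_and] at hi ⊢
      rw [hσ] at hi; exact hi
    · intro i _ j _ h; exact σ.injective h
    · intro j hj
      refine ⟨σ.symm j, ?_, by simp⟩
      simp only [mem_filter, mem_univ, true_and] at hj ⊢
      rw [hσ]; simpa using hj
  rw [hcards]
  set good : Finset (Fin n) := univ.filter (fun j : Fin n => w ≤ p.eval (hA.eigenvalues j))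
    with hgood
  refine csSup_le' ?_
  rintro m ⟨s, hs, rfl⟩
  show s.card ≤ good.card
  by_contra hcon
  push_neg at hcon
  set bad : Finset (Fin n) := goodᶜ with hbad
  have hliS : LinearIndependent ℝ
      (fun u : ↥s => (EuclideanSpace.basisFun (Fin n) ℝ) (u : Fin n)) :=
    (EuclideanSpace.basisFun (Fin n) ℝ).orthonormal.linearIndependent.comp _
      Subtype.val_injective
  have hliT : LinearIndependent ℝ
      (fun j : ↥bad => hA.eigenvectorBasis (j : Fin n)) :=
    hA.eigenvectorBasis.orthonormal.linearIndependent.comp _ Subtype.val_injective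
  set S : Submodule ℝ (V' n) := Submodule.span ℝ
    (Set.range fun u : ↥s => (EuclideanSpace.basisFun (Fin n) ℝ) (u : Fin n)) with hS
  set T : Submodule ℝ (V' n) := Submodule.span ℝ
    (Set.range fun j : ↥bad => hA.eigenvectorBasis (j : Fin n)) with hT
  have hdimS : Module.finrank ℝ S = s.card := by
    rw [hS, finrank_span_eq_card hliS]
    exact Fintype.card_coe s
  have hdimT : Module.finrank ℝ T = bad.card := by
    rw [hT, finrank_span_eq_card hliT]
    exact Fintype.card_coe bad
  have hpos : 0 < Module.finrank ℝ ↥(S ⊓ T) := by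
    have h1 := Submodule.finrank_sup_add_finrank_inf_eq S T
    have h2 : Module.finrank ℝ ↥(S ⊔ T) ≤ n :=
      le_trans (Submodule.finrank_le _) (le_of_eq finrank_euclideanSpace_fin)
    have h3 : bad.card = n - good.card := by
      rw [hbad, Finset.card_compl]; simp
    have h4 : good.card ≤ n := le_trans (Finset.card_le_univ _) (by simp)
    omega
  obtain ⟨x, hx⟩ := Module.finrank_pos_iff_exists_ne_zero.mp hpos
  set y : V' n := (x : V' n) with hy
  have hyS : y ∈ S := x.2.1
  have hyT : y ∈ T := x.2.2
  have hy0 : y ≠ 0 := fun h => hx (Subtype.ext h)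
  have hsupp : ∀ v, v ∉ s → y v = 0 := by
    intro v hv
    refine Submodule.span_induction ?_ ?_ ?_ ?_ hyS
    · rintro z ⟨u, rfl⟩
      show (EuclideanSpace.basisFun (Fin n) ℝ) (u : Fin n) v = 0
      rw [EuclideanSpace.basisFun_apply, EuclideanSpace.single_apply]
      exact if_neg (fun h : v = (u : Fin n) => hv (by rw [h]; exact u.2))
    · rfl
    · intro z z' _ _ hz hz'
      show z v + z' v = 0
      rw [hz, hz', add_zero]
    · intro a z _ hz
      show a * z v = 0
      rw [hz, mul_zero]
  have hcoef : ∀ j, w ≤ p.eval (hA.eigenvalues j) → hA.eigenvectorBasis.repr y j = 0 := by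
    intro j hj
    have hjg : j ∈ good := by simp [hgood, hj]
    refine Submodule.span_induction ?_ ?_ ?_ ?_ hyT
    · rintro z ⟨i, rfl⟩
      show hA.eigenvectorBasis.repr (hA.eigenvectorBasis (i : Fin n)) j = 0
      rw [OrthonormalBasis.repr_self, EuclideanSpace.single_apply]
      refine if_neg (fun h => ?_)
      have hib : (i : Fin n) ∈ bad := i.2
      rw [← h] at hib
      exact (Finset.mem_compl.mp hib) hjg
    · simp
    · intro z z' _ _ hz hz'
      rw [map_add]
      show hA.eigenvectorBasis.repr z j + hA.eigenvectorBasis.repr z' j = 0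
      rw [hz, hz', add_zero]
    · intro a z _ hz
      rw [_root_.map_smul]
      show a * hA.eigenvectorBasis.repr z j = 0
      rw [hz, mul_zero]
  set B := Polynomial.aeval (G.adjMatrix ℝ) p with hB
  set c : Fin n → ℝ := fun j => hA.eigenvectorBasis.repr y j with hc
  have hfy : Matrix.toEuclideanLin B y
      = ∑ j, (c j * p.eval (hA.eigenvalues j)) • hA.eigenvectorBasis j := by
    conv_lhs => rw [← hA.eigenvectorBasis.sum_repr y]
    rw [map_sum]
    refine Finset.sum_congr rfl fun j _ => ?_
    rw [_root_.map_smul, hB, aux_toEuclidean_eigen, smul_smul]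
  have hyinner : ∀ j, ⟪y, hA.eigenvectorBasis j⟫ = c j := by
    intro j
    rw [real_inner_comm, ← hA.eigenvectorBasis.repr_apply_apply]
  have key : ⟪y, Matrix.toEuclideanLin B y⟫ = ∑ j, p.eval (hA.eigenvalues j) * (c j * c j) := by
    rw [hfy, inner_sum]
    refine Finset.sum_congr rfl fun j _ => ?_
    rw [real_inner_smul_right, hyinner]
    ring
  have key2 : ⟪y, y⟫ = ∑ j, c j * c j := by
    rw [← hA.eigenvectorBasis.repr.inner_map_map y y, aux_inner_coord]
  have hlow : w * ⟪y, y⟫ ≤ ⟪y, Matrix.toEuclideanLin B y⟫ := by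
    rw [aux_inner_mulVec, aux_inner_coord, Finset.mul_sum]
    refine Finset.sum_le_sum fun u _ => ?_
    rw [Finset.sum_eq_single_of_mem u (Finset.mem_univ u) ?_]
    · have hBu : w ≤ B u u := hw.2 ⟨u, rfl⟩
      nlinarith [mul_self_nonneg (y u)]
    · intro v _ hvu
      by_cases hyv : y v = 0
      · rw [hyv, mul_zero]
      by_cases hyu : y u = 0
      · rw [hyu, zero_mul, zero_mul]
      have hvs : v ∈ s := by by_contra h; exact hyv (hsupp v h)
      have hus : u ∈ s := by by_contra h; exact hyu (hsupp u h)
      rw [hB, aux_zero_entry G p hp (hs u hus v hvs (Ne.symm hvu))]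
      ring
  have hupp : ⟪y, Matrix.toEuclideanLin B y⟫ < w * ⟪y, y⟫ := by
    rw [key, key2, Finset.mul_sum]
    have hex : ∃ j0, c j0 ≠ 0 := by
      by_contra h
      push_neg at h
      apply hy0
      have hz : hA.eigenvectorBasis.repr y = 0 := by
        ext j; exact h j
      exact (hA.eigenvectorBasis.repr.toLinearEquiv.map_eq_zero_iff).mp hz
    obtain ⟨j0, hj0⟩ := hex
    have hbadj : ∀ i, c i ≠ 0 → p.eval (hA.eigenvalues i) < w := by
      intro i hi
      by_contra h
      push_neg at h
      exact hi (hcoef i h)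
    refine Finset.sum_lt_sum (fun i _ => ?_) ⟨j0, Finset.mem_univ j0, ?_⟩
    · by_cases hci : c i = 0
      · rw [hci]; simp
      · exact mul_le_mul_of_nonneg_right (hbadj i hci).le (mul_self_nonneg _)
    · have h1 : 0 < c j0 * c j0 := by
        rcases lt_or_gt_of_ne hj0 with h | h
        · exact mul_pos_of_neg_of_neg h h
        · exact mul_pos h h
      exact mul_lt_mul_of_pos_right (hbadj j0 hj0) h1
  linarith
end

section
/- Let G be a graph on n vertices with adjacency matrix A and eigenvalues λ₁ ≥ ⋯ ≥ λₙ. Let p be a real polynomial of degree at most k, and let W(p) = max over vertices u of (p(A))_{uu}. Then α_k(G) ≤ |{i : p(λᵢ) ≤ W(p)}|. -/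
open Polynomial Matrix Finset
open scoped Classical

private lemma aux_finrank_span {n : ℕ} (bb : Module.Basis (Fin n) ℝ (EuclideanSpace ℝ (Fin n)))
    (t : Finset (Fin n)) :
    Module.finrank ℝ (Submodule.span ℝ (⇑bb '' ↑t)) = t.card := by
  rw [Set.image_eq_range]
  have h1 : LinearIndependent ℝ (fun x : (↑t : Set (Fin n)) => bb x) :=
    bb.linearIndependent.comp _ Subtype.val_injective
  rw [finrank_span_eq_card h1]
  simp

set_option maxHeartbeats 1600000 in
theorem stmt_1 {n k : ℕ} (G : SimpleGraph (Fin n))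
    (hA : (G.adjMatrix ℝ).IsHermitian)
    (eig : Fin n → ℝ) (hmono : Antitone eig)
    (hperm : ∃ σ : Equiv.Perm (Fin n), eig = hA.eigenvalues ∘ σ)
    (p : Polynomial ℝ) (hp : p.natDegree ≤ k)
    (W : ℝ)
    (hW : IsGreatest {x : ℝ | ∃ u : Fin n, x = (Polynomial.aeval (G.adjMatrix ℝ) p) u u} W) :
    kIndepNum G k ≤ (Finset.univ.filter (fun i : Fin n => p.eval (eig i) ≤ W)).card := by
  classical
  obtain ⟨σ, hσ⟩ := hperm
  set A : Matrix (Fin n) (Fin n) ℝ := G.adjMatrix ℝ with hAdef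
  set B : Matrix (Fin n) (Fin n) ℝ := aeval A p with hBdef
  set lam : Fin n → ℝ := hA.eigenvalues with hlam
  set q : Fin n → ℝ := fun i => p.eval (lam i) with hq
  set m : ℕ := (Finset.univ.filter (fun i : Fin n => q i ≤ W)).card with hm
  have hfilter : (Finset.univ.filter (fun i : Fin n => p.eval (eig i) ≤ W)).card = m := by
    rw [hm]
    apply Finset.card_bij (fun i _ => σ i)
    · intro i hi
      simp only [mem_filter, mem_univ, true_and] at hi ⊢
      simpa [hσ, hq, hlam] using hi
    · intro i _ j _ hij
      exact σ.injective hij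
    · intro j hj
      refine ⟨σ.symm j, ?_, by simp⟩
      simp only [mem_filter, mem_univ, true_and] at hj ⊢
      simpa [hσ, hq, hlam] using hj
  have key : ∀ s : Finset (Fin n),
      (∀ u ∈ s, ∀ v ∈ s, u ≠ v → ∀ w : G.Walk u v, k < w.length) → s.card ≤ m := by
    intro s hs
    by_contra hcard
    push_neg at hcard
    -- off-diagonal entries of B on s vanish
    have hoff : ∀ u ∈ s, ∀ v ∈ s, u ≠ v → B u v = 0 := by
      intro u hu v hv huv
      have hpow : ∀ j : ℕ, j ≤ k → (A ^ j) u v = 0 := by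
        intro j hj
        rw [hAdef, SimpleGraph.adjMatrix_pow_apply_eq_card_walk]
        norm_cast
        rw [Fintype.card_eq_zero_iff]
        constructor
        rintro ⟨w, hw⟩
        simp only [Set.mem_setOf_eq] at hw
        have := hs u hu v hv huv w
        omega
      rw [hBdef, aeval_eq_sum_range]
      rw [Matrix.sum_apply]
      apply Finset.sum_eq_zero
      intro j hj
      rw [Finset.mem_range] at hj
      have hz : (A ^ j) u v = 0 := hpow j (by omega)
      simp [hz]
    have hdiag : ∀ u : Fin n, B u u ≤ W := fun u => hW.2 ⟨u, rfl⟩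
    -- eigenvectors, pointwise facts
    set b : Fin n → EuclideanSpace ℝ (Fin n) := fun i => hA.eigenvectorBasis i with hb
    have hAbu : ∀ i u, (A *ᵥ b i) u = lam i * b i u := by
      intro i u
      rw [show A *ᵥ b i = lam i • b i from hA.mulVec_eigenvectorBasis i]
      rfl
    have hpowbu : ∀ (j : ℕ) (i : Fin n) (u : Fin n),
        ((A ^ j) *ᵥ b i) u = lam i ^ j * b i u := by
      intro j
      induction j with
      | zero => intro i u; simp [Matrix.one_mulVec]
      | succ j ih =>
        intro i u
        rw [pow_succ', ← Matrix.mulVec_mulVec]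
        calc (A *ᵥ ((A ^ j) *ᵥ b i)) u = ∑ v, A u v * ((A ^ j) *ᵥ b i) v := rfl
          _ = ∑ v, A u v * (lam i ^ j * b i v) := by simp_rw [ih]
          _ = lam i ^ j * ∑ v, A u v * b i v := by
              rw [Finset.mul_sum]; exact Finset.sum_congr rfl fun v _ => by ring
          _ = lam i ^ j * (A *ᵥ b i) u := rfl
          _ = lam i ^ (j + 1) * b i u := by rw [hAbu]; ring
    have hBbu : ∀ (i u : Fin n), (B *ᵥ b i) u = q i * b i u := by
      intro i u
      have hBexp : B = ∑ j ∈ Finset.range (p.natDegree + 1), p.coeff j • A ^ j := by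
        rw [hBdef]; exact aeval_eq_sum_range A
      calc (B *ᵥ b i) u = ∑ v, B u v * b i v := rfl
        _ = ∑ v, (∑ j ∈ Finset.range (p.natDegree + 1), p.coeff j * (A ^ j) u v) * b i v := by
            simp_rw [hBexp, Matrix.sum_apply, Matrix.smul_apply, smul_eq_mul]
        _ = ∑ v, ∑ j ∈ Finset.range (p.natDegree + 1), p.coeff j * (A ^ j) u v * b i v := by
            simp_rw [Finset.sum_mul]
        _ = ∑ j ∈ Finset.range (p.natDegree + 1), ∑ v, p.coeff j * (A ^ j) u v * b i v :=
            Finset.sum_comm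
        _ = ∑ j ∈ Finset.range (p.natDegree + 1), p.coeff j * ∑ v, (A ^ j) u v * b i v := by
            refine Finset.sum_congr rfl fun j _ => ?_
            rw [Finset.mul_sum]; exact Finset.sum_congr rfl fun v _ => by ring
        _ = ∑ j ∈ Finset.range (p.natDegree + 1), p.coeff j * (lam i ^ j * b i u) := by
            refine Finset.sum_congr rfl fun j _ => ?_
            rw [show ∑ v, (A ^ j) u v * b i v = ((A ^ j) *ᵥ b i) u from rfl, hpowbu]
        _ = (∑ j ∈ Finset.range (p.natDegree + 1), p.coeff j * lam i ^ j) * b i u := by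
            rw [Finset.sum_mul]; exact Finset.sum_congr rfl fun j _ => by ring
        _ = q i * b i u := by simp only [hq, Polynomial.eval_eq_sum_range]
    have horth : ∀ i j : Fin n, ∑ u, b i u * b j u = if i = j then (1 : ℝ) else 0 := by
      intro i j
      have h := orthonormal_iff_ite.mp hA.eigenvectorBasis.orthonormal i j
      simpa [hb, PiLp.inner_apply, RCLike.inner_apply, starRingEnd_apply, mul_comm] using h
    -- subspaces
    set Tc : Finset (Fin n) := Finset.univ.filter (fun i => ¬ q i ≤ W) with hTcdef
    have hTcCard : m + Tc.card = n := by
      rw [hm, hTcdef, Finset.card_filter_add_card_filter_not, Finset.card_univ,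
        Fintype.card_fin]
    set bV : Module.Basis (Fin n) ℝ (EuclideanSpace ℝ (Fin n)) := hA.eigenvectorBasis.toBasis with hbV
    set bS : Module.Basis (Fin n) ℝ (EuclideanSpace ℝ (Fin n)) :=
      (EuclideanSpace.basisFun (Fin n) ℝ).toBasis with hbS
    set V : Submodule ℝ (EuclideanSpace ℝ (Fin n)) := Submodule.span ℝ (⇑bV '' ↑Tc) with hV
    set S : Submodule ℝ (EuclideanSpace ℝ (Fin n)) := Submodule.span ℝ (⇑bS '' ↑s) with hS
    have hVrank : Module.finrank ℝ V = Tc.card := aux_finrank_span bV Tc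
    have hSrank : Module.finrank ℝ S = s.card := aux_finrank_span bS s
    have hsum := Submodule.finrank_sup_add_finrank_inf_eq V S
    have hle : Module.finrank ℝ ↥(V ⊔ S) ≤ n := by
      have := Submodule.finrank_le (V ⊔ S)
      rwa [finrank_euclideanSpace_fin] at this
    have hposrank : 0 < Module.finrank ℝ ↥(V ⊓ S) := by omega
    have hneB : V ⊓ S ≠ ⊥ := by
      intro hbot
      rw [hbot, finrank_bot] at hposrank
      omega
    obtain ⟨x, hxmem, hx0⟩ := Submodule.exists_mem_ne_zero_of_ne_bot hneB
    have hxV : x ∈ V := hxmem.1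
    have hxS : x ∈ S := hxmem.2
    -- coordinates
    set cc : Fin n → ℝ := fun i => hA.eigenvectorBasis.repr x i with hccdef
    have hcc0 : ∀ i, i ∉ Tc → cc i = 0 := by
      intro i hi
      have hsupp := (Module.Basis.mem_span_image bV).mp hxV
      by_contra hne
      have : i ∈ (bV.repr x).support := by
        rw [Finsupp.mem_support_iff]
        rw [hbV]
        rw [hA.eigenvectorBasis.coe_toBasis_repr_apply]
        exact hne
      exact hi (by exact_mod_cast hsupp this)
    have hx0' : ∀ u, u ∉ s → x u = 0 := by
      intro u hu
      have hsupp := (Module.Basis.mem_span_image bS).mp hxS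
      by_contra hne
      have : u ∈ (bS.repr x).support := by
        rw [Finsupp.mem_support_iff]
        rw [hbS]
        rw [(EuclideanSpace.basisFun (Fin n) ℝ).coe_toBasis_repr_apply]
        exact hne
      exact hu (by exact_mod_cast hsupp this)
    have hxval : ∀ u, x u = ∑ i, cc i * b i u := by
      intro u
      conv_lhs => rw [← hA.eigenvectorBasis.sum_repr x]
      rw [show ((∑ i, hA.eigenvectorBasis.repr x i • hA.eigenvectorBasis i) u)
          = ∑ i, (hA.eigenvectorBasis.repr x i • hA.eigenvectorBasis i) u from
        by rw [WithLp.ofLp_sum, Finset.sum_apply]]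
      rfl
    have hxb : ∀ i, ∑ u, x u * b i u = cc i := by
      intro i
      calc ∑ u, x u * b i u = ∑ u, (∑ j, cc j * b j u) * b i u := by simp_rw [hxval]
        _ = ∑ u, ∑ j, cc j * b j u * b i u := by simp_rw [Finset.sum_mul]
        _ = ∑ j, ∑ u, cc j * b j u * b i u := Finset.sum_comm
        _ = ∑ j, cc j * ∑ u, b j u * b i u := by
            refine Finset.sum_congr rfl fun j _ => ?_
            rw [Finset.mul_sum]; exact Finset.sum_congr rfl fun u _ => by ring
        _ = ∑ j, cc j * if j = i then (1:ℝ) else 0 := by simp_rw [horth]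
        _ = cc i := by simp
    -- two evaluations of the quadratic form
    set Q : ℝ := ∑ u, x u * (B *ᵥ x) u with hQdef
    set N : ℝ := ∑ u, x u * x u with hNdef
    have hBxu : ∀ u, (B *ᵥ x) u = ∑ i, cc i * (q i * b i u) := by
      intro u
      calc (B *ᵥ x) u = ∑ v, B u v * x v := rfl
        _ = ∑ v, B u v * ∑ i, cc i * b i v := by simp_rw [hxval]
        _ = ∑ v, ∑ i, B u v * (cc i * b i v) := by simp_rw [Finset.mul_sum]
        _ = ∑ i, ∑ v, B u v * (cc i * b i v) := Finset.sum_comm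
        _ = ∑ i, cc i * ∑ v, B u v * b i v := by
            refine Finset.sum_congr rfl fun i _ => ?_
            rw [Finset.mul_sum]; exact Finset.sum_congr rfl fun v _ => by ring
        _ = ∑ i, cc i * (q i * b i u) := by
            refine Finset.sum_congr rfl fun i _ => ?_
            rw [show ∑ v, B u v * b i v = (B *ᵥ b i) u from rfl, hBbu]
    have hQeig : Q = ∑ i, cc i * q i * cc i := by
      calc Q = ∑ u, x u * ∑ i, cc i * (q i * b i u) := by
            rw [hQdef]; exact Finset.sum_congr rfl fun u _ => by rw [hBxu]
        _ = ∑ u, ∑ i, cc i * q i * (x u * b i u) := by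
            refine Finset.sum_congr rfl fun u _ => ?_
            rw [Finset.mul_sum]; exact Finset.sum_congr rfl fun i _ => by ring
        _ = ∑ i, ∑ u, cc i * q i * (x u * b i u) := Finset.sum_comm
        _ = ∑ i, cc i * q i * ∑ u, x u * b i u := by
            refine Finset.sum_congr rfl fun i _ => ?_
            rw [Finset.mul_sum]
        _ = ∑ i, cc i * q i * cc i := by simp_rw [hxb]
    have hNeig : N = ∑ i, cc i * cc i := by
      calc N = ∑ u, (∑ i, cc i * b i u) * x u := by
            rw [hNdef]; exact Finset.sum_congr rfl fun u _ => by rw [← hxval]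
        _ = ∑ u, ∑ i, cc i * (x u * b i u) := by
            refine Finset.sum_congr rfl fun u _ => ?_
            rw [Finset.sum_mul]; exact Finset.sum_congr rfl fun i _ => by ring
        _ = ∑ i, ∑ u, cc i * (x u * b i u) := Finset.sum_comm
        _ = ∑ i, cc i * ∑ u, x u * b i u := by
            refine Finset.sum_congr rfl fun i _ => ?_
            rw [Finset.mul_sum]
        _ = ∑ i, cc i * cc i := by simp_rw [hxb]
    -- a coordinate with nonzero coefficient
    obtain ⟨i₀, hi₀⟩ : ∃ i, cc i ≠ 0 := by
      by_contra hall
      push_neg at hall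
      apply hx0
      exact PiLp.ext fun u => by rw [hxval u]; simp [hall]
    have hi₀Tc : i₀ ∈ Tc := by
      by_contra hnot
      exact hi₀ (hcc0 i₀ hnot)
    -- strict lower bound via eigenvalues
    have hlower : W * N < Q := by
      have hQ' : Q = ∑ i ∈ Tc, cc i * q i * cc i := by
        rw [hQeig]
        exact (Finset.sum_subset (Finset.subset_univ Tc)
          (fun i _ hi => by simp [hcc0 i hi])).symm
      have hN' : N = ∑ i ∈ Tc, cc i * cc i := by
        rw [hNeig]
        exact (Finset.sum_subset (Finset.subset_univ Tc)
          (fun i _ hi => by simp [hcc0 i hi])).symm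
      rw [hQ', hN', Finset.mul_sum]
      apply Finset.sum_lt_sum
      · intro i hi
        have hWq : W < q i := by
          rw [hTcdef] at hi
          simp only [mem_filter, mem_univ, true_and] at hi
          linarith [lt_of_not_ge hi]
        nlinarith [mul_self_nonneg (cc i)]
      · refine ⟨i₀, hi₀Tc, ?_⟩
        have hWq : W < q i₀ := by
          rw [hTcdef] at hi₀Tc
          simp only [mem_filter, mem_univ, true_and] at hi₀Tc
          linarith [lt_of_not_ge hi₀Tc]
        have hpos : 0 < cc i₀ * cc i₀ := mul_self_pos.mpr hi₀
        nlinarith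
    -- upper bound via diagonal entries
    have hupper : Q ≤ W * N := by
      have hQ2 : Q = ∑ u ∈ s, x u * (B u u * x u) := by
        calc Q = ∑ u, x u * ∑ v, B u v * x v := rfl
          _ = ∑ u ∈ s, x u * ∑ v, B u v * x v := by
              exact (Finset.sum_subset (Finset.subset_univ s)
                (fun u _ hu => by simp [hx0' u hu])).symm
          _ = ∑ u ∈ s, x u * ∑ v ∈ s, B u v * x v := by
              refine Finset.sum_congr rfl fun u hu => ?_
              congr 1
              exact (Finset.sum_subset (Finset.subset_univ s)
                (fun v _ hv => by rw [hx0' v hv]; ring)).symm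
          _ = ∑ u ∈ s, x u * (B u u * x u) := by
              refine Finset.sum_congr rfl fun u hu => ?_
              congr 1
              apply Finset.sum_eq_single u
              · intro v hv hvu
                simp [hoff u hu v hv (Ne.symm hvu)]
              · intro h; exact absurd hu h
      have hN2 : N = ∑ u ∈ s, x u * x u := by
        rw [hNdef]
        exact (Finset.sum_subset (Finset.subset_univ s)
          (fun u _ hu => by simp [hx0' u hu])).symm
      rw [hQ2, hN2, Finset.mul_sum]
      apply Finset.sum_le_sum
      intro u hu
      have := hdiag u
      nlinarith [mul_self_nonneg (x u)]
    linarith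
  rw [hfilter]
  unfold kIndepNum
  apply csSup_le
  · exact ⟨0, ∅, fun u hu => absurd hu (by simp), rfl⟩
  · rintro m' ⟨t, ht, rfl⟩
    exact key t ht
end

section
/- Let G be a δ-regular graph on n vertices with adjacency matrix A and distinct eigenvalues θ₀ = δ > θ₁ > ⋯ > θ_d, d ≥ 2. Let θᵢ be the largest distinct eigenvalue with θᵢ ≤ −1 (such an eigenvalue exists since θ_d ≤ −1). Then the 2-independence number satisfies α₂(G) ≤ n(θ₀ + θᵢθᵢ₋₁) / ((θ₀ − θᵢ)(θ₀ − θᵢ₋₁)). -/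
open Polynomial Matrix Finset
open scoped Classical

lemma final_step (a b c K : ℝ) (hK : 0 < K) (h : a * K^2 ≤ b * (K * c)) :
    K * a ≤ b * c := by nlinarith

lemma diag_poly {N : ℕ} (f : Fin N → ℝ) (c e : ℝ) :
    diagonal f * diagonal f - c • diagonal f + e • (1 : Matrix (Fin N) (Fin N) ℝ)
      = diagonal (fun k => f k ^ 2 - c * f k + e) := by
  rw [diagonal_mul_diagonal]
  ext k l
  rcases eq_or_ne k l with rfl | h
  · simp; ring
  · simp [diagonal_apply_ne _ h, Matrix.one_apply_ne h]

lemma quadPoly_spectral {N : ℕ} (A : Matrix (Fin N) (Fin N) ℝ) (hA : A.IsHermitian) (c e : ℝ) :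
    A * A - c • A + e • 1 =
      (hA.eigenvectorUnitary : Matrix (Fin N) (Fin N) ℝ) *
        diagonal (fun k => hA.eigenvalues k ^ 2 - c * hA.eigenvalues k + e) *
        star (hA.eigenvectorUnitary : Matrix (Fin N) (Fin N) ℝ) := by
  set U : Matrix (Fin N) (Fin N) ℝ := (hA.eigenvectorUnitary : Matrix (Fin N) (Fin N) ℝ) with hU
  have hU1 : U * star U = 1 := (Matrix.mem_unitaryGroup_iff).mp hA.eigenvectorUnitary.2
  have hU2 : star U * U = 1 := (Matrix.mem_unitaryGroup_iff').mp hA.eigenvectorUnitary.2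
  set D : Matrix (Fin N) (Fin N) ℝ := diagonal hA.eigenvalues with hD
  have hsp : A = U * D * star U := by
    have := hA.spectral_theorem
    simpa using this
  have key : (U * D * star U) * (U * D * star U) = U * (D * D) * star U := by
    simp only [mul_assoc]
    rw [← mul_assoc (star U) U, hU2, one_mul]
  have hs : U * (c • D) * star U = c • (U * D * star U) := by
    rw [Matrix.mul_smul, Matrix.smul_mul]
  have he : U * (e • 1) * star U = e • (1 : Matrix (Fin N) (Fin N) ℝ) := by
    rw [Matrix.mul_smul, mul_one, Matrix.smul_mul, hU1]
  conv_lhs => rw [hsp]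
  rw [key, ← hs, ← he]
  conv_rhs => rw [← diag_poly hA.eigenvalues c e]
  rw [mul_add, mul_sub, add_mul, sub_mul]

lemma quadPoly_posSemidef {N : ℕ} (A : Matrix (Fin N) (Fin N) ℝ) (hA : A.IsHermitian) (c e : ℝ)
    (h : ∀ k, 0 ≤ hA.eigenvalues k ^ 2 - c * hA.eigenvalues k + e) :
    (A * A - c • A + e • 1).PosSemidef := by
  rw [quadPoly_spectral A hA c e, Matrix.star_eq_conjTranspose]
  exact (Matrix.PosSemidef.diagonal h).mul_mul_conjTranspose_same _

lemma quadPoly_trace {N : ℕ} (A : Matrix (Fin N) (Fin N) ℝ) (hA : A.IsHermitian) (c e : ℝ) :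
    (A * A - c • A + e • 1).trace = ∑ k, (hA.eigenvalues k ^ 2 - c * hA.eigenvalues k + e) := by
  rw [quadPoly_spectral A hA c e, Matrix.trace_mul_cycle,
    (Matrix.mem_unitaryGroup_iff').mp hA.eigenvectorUnitary.2, one_mul, Matrix.trace_diagonal]

theorem stmt_4 {n d δ : ℕ} (hd : 2 ≤ d) (G : SimpleGraph (Fin n))
    (hconn : G.Connected) (hreg : G.IsRegularOfDegree δ)
    (hA : (G.adjMatrix ℝ).IsHermitian)
    (θ : Fin (d + 1) → ℝ) (hθ : StrictAnti θ)
    (hrange : Set.range hA.eigenvalues = Set.range θ)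
    (hθ0 : θ 0 = δ)
    (i j : Fin (d + 1)) (hij : (i : ℕ) = (j : ℕ) + 1)
    (hile : θ i ≤ -1) (hmax : ∀ l : Fin (d + 1), θ l ≤ -1 → θ l ≤ θ i) :
    (kIndepNum G 2 : ℝ) ≤ n * (θ 0 + θ i * θ j) / ((θ 0 - θ i) * (θ 0 - θ j)) := by
  have hn : 0 < n := Fin.pos_iff_nonempty.mpr hconn.nonempty
  have hn0 : (0:ℝ) < n := by exact_mod_cast hn
  set A : Matrix (Fin n) (Fin n) ℝ := G.adjMatrix ℝ with hAdef
  set cc : ℝ := θ i + θ j with hcc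
  set ee : ℝ := θ i * θ j with hee
  set B : Matrix (Fin n) (Fin n) ℝ := A * A - cc • A + ee • 1 with hBdef
  have hfactor : ∀ t : ℝ, t ^ 2 - cc * t + ee = (t - θ i) * (t - θ j) := by intro t; ring
  have hji : j < i := by rw [Fin.lt_def]; omega
  have hθji : θ i < θ j := hθ hji
  -- nonnegativity of the quadratic on all eigenvalues
  have hqev : ∀ k, 0 ≤ hA.eigenvalues k ^ 2 - cc * hA.eigenvalues k + ee := by
    intro k
    obtain ⟨l, hl⟩ : hA.eigenvalues k ∈ Set.range θ := hrange ▸ Set.mem_range_self k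
    rw [← hl, hfactor]
    rcases le_or_gt l j with h | h
    · have h1 : θ j ≤ θ l := hθ.antitone h
      have h2 : θ i < θ l := lt_of_lt_of_le hθji h1
      nlinarith
    · have h2 : θ l ≤ θ i := by
        apply hθ.antitone
        rw [Fin.le_def]; rw [Fin.lt_def] at h; omega
      nlinarith
  have hBpsd : B.PosSemidef := by
    rw [hBdef]
    exact quadPoly_posSemidef A hA cc ee hqev
  -- A acts on the all-ones vector
  set u1 : Fin n → ℝ := fun _ => 1 with hu1
  have hsum_u1 : ∑ v, u1 v = (n:ℝ) := by simp [hu1]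
  have hAone : A *ᵥ u1 = (δ:ℝ) • u1 := by
    funext v
    simp [hAdef, hu1, SimpleGraph.adjMatrix_mulVec_const_apply, hreg v]
  set qd : ℝ := (δ:ℝ) ^ 2 - cc * (δ:ℝ) + ee with hqd
  have hBone : B *ᵥ u1 = qd • u1 := by
    rw [hBdef, Matrix.add_mulVec, Matrix.sub_mulVec, Matrix.smul_mulVec,
      Matrix.smul_mulVec, Matrix.one_mulVec, ← Matrix.mulVec_mulVec, hAone,
      Matrix.mulVec_smul, hAone]
    funext v
    simp [hqd, hu1]
    ring
  have hBsymm : Bᵀ = B := by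
    have := hBpsd.1
    rwa [Matrix.IsHermitian, Matrix.conjTranspose_eq_transpose_of_trivial] at this
  have hBu : ∀ z : Fin n → ℝ, u1 ⬝ᵥ (B *ᵥ z) = qd * ∑ v, z v := by
    intro z
    rw [Matrix.dotProduct_mulVec, ← Matrix.mulVec_transpose, hBsymm, hBone]
    simp [smul_dotProduct, dotProduct, hu1, Finset.mul_sum]
  have hBu' : ∀ z : Fin n → ℝ, z ⬝ᵥ (B *ᵥ u1) = qd * ∑ v, z v := by
    intro z
    rw [hBone]
    simp [dotProduct_smul, dotProduct, hu1]
    rw [← Finset.sum_mul, mul_comm]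
  -- the key quadratic-form inequality
  have hkey : ∀ x : Fin n → ℝ, qd * (∑ v, x v)^2 ≤ n * (x ⬝ᵥ B *ᵥ x) := by
    intro x
    set c : ℝ := (∑ v, x v) / n with hc
    set y : Fin n → ℝ := x - c • u1 with hy
    have hcn : c * n = ∑ v, x v := by rw [hc, div_mul_cancel₀]; exact hn0.ne'
    have hynn : 0 ≤ y ⬝ᵥ B *ᵥ y := by
      have := hBpsd.dotProduct_mulVec_nonneg y
      simpa using this
    have expand : y ⬝ᵥ B *ᵥ y
        = x ⬝ᵥ B *ᵥ x - c * (qd * ∑ v, x v) - (c * (qd * ∑ v, x v) - c * (c * (qd * n))) := by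
      rw [hy, Matrix.mulVec_sub, Matrix.mulVec_smul, sub_dotProduct,
        smul_dotProduct, dotProduct_sub, dotProduct_sub,
        dotProduct_smul, dotProduct_smul, hBu, hBu', hBu', hsum_u1]
      simp only [smul_eq_mul]
      push_cast
      ring
    have h2 : (n:ℝ) * (x ⬝ᵥ B *ᵥ x) = n * (y ⬝ᵥ B *ᵥ y) + qd * (∑ v, x v)^2 := by
      linear_combination (-(n:ℝ)) * expand + qd * ((∑ v, x v) - c * n) * hcn
    have h3 : 0 ≤ (n:ℝ) * (y ⬝ᵥ B *ᵥ y) := mul_nonneg hn0.le hynn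
    linarith
  -- quadratic form over a 2-independent finset
  have hmain : ∀ s : Finset (Fin n),
      (∀ u ∈ s, ∀ v ∈ s, u ≠ v → ∀ w : G.Walk u v, 2 < w.length) →
      qd * (s.card:ℝ)^2 ≤ n * (s.card * ((δ:ℝ) + ee)) := by
    intro s hs
    set χ : Fin n → ℝ := fun v => if v ∈ s then 1 else 0 with hchi
    have hsumχ : ∑ v, χ v = (s.card : ℝ) := by
      simp [hchi]
    have hdiag : ∀ u, B u u = (δ:ℝ) + ee := by
      intro u
      have h1 : (A * A) u u = (δ:ℝ) := by
        rw [hAdef, SimpleGraph.adjMatrix_mul_self_apply_self]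
        simp [hreg u]
      have h2 : A u u = 0 := by simp [hAdef]
      simp [hBdef, Matrix.sub_apply, Matrix.add_apply, Matrix.smul_apply, Matrix.one_apply_eq,
        h1, h2]
    have hoff : ∀ u ∈ s, ∀ v ∈ s, u ≠ v → B u v = 0 := by
      intro u hu v hv huv
      have hadj : ¬ G.Adj u v := by
        intro h
        have := hs u hu v hv huv (SimpleGraph.Walk.cons h SimpleGraph.Walk.nil)
        simp [SimpleGraph.Walk.length_cons] at this
      have h2 : (A * A) u v = 0 := by
        rw [Matrix.mul_apply]
        apply Finset.sum_eq_zero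
        intro w _
        by_cases ha : G.Adj u w
        · by_cases hb : G.Adj w v
          · exfalso
            have := hs u hu v hv huv
              (SimpleGraph.Walk.cons ha (SimpleGraph.Walk.cons hb SimpleGraph.Walk.nil))
            simp at this
          · simp [hAdef, hb]
        · simp [hAdef, ha]
      have h3 : A u v = 0 := by simp [hAdef, hadj]
      simp [hBdef, Matrix.sub_apply, Matrix.add_apply, Matrix.smul_apply, h2, h3,
        Matrix.one_apply_ne huv]
    have hmv : ∀ u, (B *ᵥ χ) u = ∑ v ∈ s, B u v := by
      intro u
      simp [Matrix.mulVec, dotProduct, hchi, mul_ite, mul_one, mul_zero]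
    have hquad : χ ⬝ᵥ B *ᵥ χ = (s.card : ℝ) * ((δ:ℝ) + ee) := by
      have step1 : χ ⬝ᵥ B *ᵥ χ = ∑ u ∈ s, ∑ v ∈ s, B u v := by
        rw [dotProduct]
        rw [show ∀ f : Fin n → ℝ, ∑ u, χ u * f u = ∑ u ∈ s, f u from ?_]
        · exact Finset.sum_congr rfl fun u _ => hmv u
        · intro f
          simp [hchi, ite_mul, one_mul, zero_mul]
      rw [step1]
      have step2 : ∀ u ∈ s, ∑ v ∈ s, B u v = (δ:ℝ) + ee := by
        intro u hu
        rw [Finset.sum_eq_single_of_mem u hu]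
        · exact hdiag u
        · intro v hv hvu
          exact hoff u hu v hv (Ne.symm hvu)
      rw [Finset.sum_congr rfl step2, Finset.sum_const, nsmul_eq_mul]
    have := hkey χ
    rw [hquad, hsumχ] at this
    exact this
  -- a single vertex gives positivity information
  obtain ⟨u0⟩ := hconn.nonempty
  have hsingle := hmain {u0} (by
    intro u hu v hv huv
    simp only [Finset.mem_singleton] at hu hv
    exact absurd (hu.trans hv.symm) huv)
  norm_num at hsingle
  -- exclude j = 0 via the trace
  have hj0 : (j:ℕ) ≠ 0 := by
    intro h0
    have hj' : j = 0 := Fin.ext (by simpa using h0)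
    have hθj0 : θ j = θ 0 := by rw [hj']
    have hee' : ee = θ i * (δ:ℝ) := by rw [hee, hθj0, hθ0]
    have htr1 : B.trace = ∑ k, (hA.eigenvalues k ^ 2 - cc * hA.eigenvalues k + ee) := by
      rw [hBdef]; exact quadPoly_trace A hA cc ee
    have htrA2 : (A * A).trace = (n:ℝ) * δ := by
      rw [Matrix.trace]
      rw [Finset.sum_congr rfl (fun u _ => show (A * A).diag u = (δ:ℝ) by
        rw [Matrix.diag_apply, hAdef, SimpleGraph.adjMatrix_mul_self_apply_self]
        simp [hreg u])]
      simp [mul_comm]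
    have htr2 : B.trace = (n:ℝ) * δ + ee * n := by
      rw [hBdef, Matrix.trace_add, Matrix.trace_sub, Matrix.trace_smul, Matrix.trace_smul,
        Matrix.trace_one, htrA2, hAdef, SimpleGraph.trace_adjMatrix]
      simp
      try ring
    set l2 : Fin (d+1) := ⟨2, by omega⟩ with hl2
    have hl2i : i < l2 := by rw [Fin.lt_def]; simp [hl2]; omega
    have h1 : θ l2 < θ i := hθ hl2i
    have h2 : θ l2 < θ j := hθ (lt_trans hji hl2i)
    obtain ⟨k2, hk2⟩ : θ l2 ∈ Set.range hA.eigenvalues := by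
      rw [hrange]; exact Set.mem_range_self _
    have hpos : 0 < hA.eigenvalues k2 ^ 2 - cc * hA.eigenvalues k2 + ee := by
      rw [hk2, hfactor]; nlinarith
    have hsumpos : (0:ℝ) < ∑ k, (hA.eigenvalues k ^ 2 - cc * hA.eigenvalues k + ee) :=
      lt_of_lt_of_le hpos (Finset.single_le_sum (fun k _ => hqev k) (Finset.mem_univ k2))
    have hδ0 : (0:ℝ) ≤ (δ:ℝ) := Nat.cast_nonneg δ
    nlinarith [hsumpos, htr1, htr2, hile, hδ0, hn0, hee',
      mul_nonneg hn0.le hδ0]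
  have hθ0j : θ j < θ 0 := hθ (by rw [Fin.lt_def]; show 0 < (j:ℕ); omega)
  have hθ0i : θ i < θ 0 := lt_trans hθji hθ0j
  have hqdpos : 0 < qd := by
    rw [hqd, hfactor, ← hθ0]
    nlinarith
  have hden : (θ 0 - θ i) * (θ 0 - θ j) = qd := by rw [hqd, hfactor, hθ0]
  have hDpos : 0 < (δ:ℝ) + ee := by
    by_contra h
    push_neg at h
    have : (n:ℝ) * ((δ:ℝ) + ee) ≤ 0 := mul_nonpos_of_nonneg_of_nonpos hn0.le h
    linarith
  -- extract a maximiser of the 2-independence number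
  have hwit : ∃ s : Finset (Fin n),
      (∀ u ∈ s, ∀ v ∈ s, u ≠ v → ∀ w : G.Walk u v, 2 < w.length) ∧ s.card = kIndepNum G 2 := by
    have hne : {m | ∃ s : Finset (Fin n),
        (∀ u ∈ s, ∀ v ∈ s, u ≠ v → ∀ w : G.Walk u v, 2 < w.length) ∧ s.card = m}.Nonempty :=
      ⟨0, ∅, by simp, by simp⟩
    have hbdd : BddAbove {m | ∃ s : Finset (Fin n),
        (∀ u ∈ s, ∀ v ∈ s, u ≠ v → ∀ w : G.Walk u v, 2 < w.length) ∧ s.card = m} := by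
      refine ⟨n, ?_⟩
      rintro m ⟨s, -, rfl⟩
      simpa using s.card_le_univ
    exact Nat.sSup_mem hne hbdd
  obtain ⟨s, hs, hcard⟩ := hwit
  have hineq := hmain s hs
  rw [hcard] at hineq
  rw [hden, hθ0, le_div_iff₀ hqdpos]
  have hDpos' : (0:ℝ) ≤ (n:ℝ) * ((δ:ℝ) + ee) := le_of_lt (mul_pos hn0 hDpos)
  clear_value A B cc ee qd
  clear hmain hkey hsingle hs hcard hBpsd hqev
  generalize (kIndepNum G 2 : ℕ) = K at hineq ⊢
  rcases Nat.eq_zero_or_pos K with h0 | hpos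
  · rw [h0]
    simpa using hDpos'
  · have hs0 : (0:ℝ) < (K : ℝ) := by exact_mod_cast hpos
    exact final_step _ _ _ _ hs0 hineq
end

section
/- For every even positive integer k, the polynomial p(x) = x + x² + ⋯ + x^k satisfies p(x) ≥ −1/2 for all real x. -/
theorem stmt_7 (k : ℕ) (hk : Even k) (hkpos : 0 < k) (x : ℝ) :
    -(1 / 2) ≤ ∑ j ∈ Finset.Icc 1 k, x ^ j := by
  rcases le_or_gt 0 x with hx | hx
  · have : (0:ℝ) ≤ ∑ j ∈ Finset.Icc 1 k, x ^ j :=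
      Finset.sum_nonneg fun j _ => pow_nonneg hx j
    linarith
  · have hx1 : x ≠ 1 := by linarith
    have hsum : ∑ j ∈ Finset.Icc 1 k, x ^ j = (x ^ (k+1) - 1) / (x - 1) - 1 := by
      have h := geom_sum_eq hx1 (k+1)
      have hsplit : ∑ j ∈ Finset.range (k+1), x ^ j
          = x ^ 0 + ∑ j ∈ Finset.Icc 1 k, x ^ j := by
        rw [Finset.range_eq_Ico, Finset.sum_eq_sum_Ico_succ_bot (by omega)]
        rw [Finset.Ico_add_one_right_eq_Icc]
      rw [h] at hsplit
      simp at hsplit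
      linarith
    rw [hsum]
    have hxk : (0:ℝ) ≤ x ^ k := hk.pow_nonneg x
    have hkey : x ^ (k+1) ≤ (x + 1) / 2 := by
      rcases le_or_gt (-1) x with h1 | h1
      · have : x ^ (k+1) ≤ 0 := by
          rw [pow_succ]
          exact mul_nonpos_of_nonneg_of_nonpos hxk hx.le
        linarith
      · have hxk1 : (1:ℝ) ≤ x ^ k := by
          rw [← hk.pow_abs]
          exact one_le_pow₀ (by rw [abs_of_neg hx]; linarith)
        have : x ^ (k+1) ≤ x := by
          rw [pow_succ]
          nlinarith
        linarith
    have hd : x - 1 < 0 := by linarith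
    rw [div_sub' (by linarith : x - 1 ≠ 0), le_div_iff_of_neg hd]
    nlinarith
end

section
/- Let G be a δ-regular graph on n vertices with eigenvalues λ₁ = δ ≥ λ₂ ≥ ⋯ ≥ λₙ, and suppose G has a k-independent set of size r ≥ 2. Let p be a polynomial of degree at most k with Λ(p) = max_{2≤i≤n} p(λᵢ) > 0, λ(p) = min_{2≤i≤n} p(λᵢ) < 0, p(λ₁) ≥ Λ(p), and Λ(p) ≥ |λ(p)|(r−1). Then r ≤ 1 + (Λ(p)/p(λ₁))·(n−1). -/
open Polynomial Matrix Finset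
open scoped Classical

lemma my_conj_aeval {m : Type*} [Fintype m] [DecidableEq m] (U D : Matrix m m ℝ)
    (hU : U * star U = 1) (hU' : star U * U = 1) (q : ℝ[X]) :
    aeval (U * D * star U) q = U * aeval D q * star U := by
  have hcancel : ∀ X : Matrix m m ℝ, star U * (U * X) = X := fun X => by
    rw [← mul_assoc, hU', one_mul]
  induction q using Polynomial.induction_on' with
  | add f g hf hg => simp [map_add, Matrix.mul_add, Matrix.add_mul, hf, hg]
  | monomial k a =>
    have hpow : ∀ j : ℕ, (U * D * star U) ^ j = U * D ^ j * star U := by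
      intro j
      induction j with
      | zero => simpa using hU.symm
      | succ j ih =>
        rw [pow_succ, ih, pow_succ]
        simp only [mul_assoc, hcancel]
    simp only [aeval_monomial, hpow]
    rw [Algebra.algebraMap_eq_smul_one]
    simp [Matrix.smul_mul, Matrix.mul_smul]

lemma my_aeval_diagonal {m : Type*} [Fintype m] [DecidableEq m] (d : m → ℝ) (q : ℝ[X]) :
    aeval (Matrix.diagonal d) q = Matrix.diagonal (fun i => q.eval (d i)) := by
  induction q using Polynomial.induction_on' with
  | add f g hf hg => simp [map_add, hf, hg, diagonal_add]
  | monomial k a =>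
    simp only [aeval_monomial, diagonal_pow, Algebra.algebraMap_eq_smul_one, eval_monomial]
    rw [smul_mul_assoc, one_mul, ← Matrix.diagonal_smul]
    congr 1

lemma my_entry {m : Type*} [Fintype m] [DecidableEq m] {A : Matrix m m ℝ}
    (hA : A.IsHermitian) (q : ℝ[X]) (u v : m) :
    (aeval A q) u v = ∑ j, q.eval (hA.eigenvalues j) *
      ((hA.eigenvectorUnitary : Matrix m m ℝ) u j * (hA.eigenvectorUnitary : Matrix m m ℝ) v j) := by
  set U : Matrix m m ℝ := (hA.eigenvectorUnitary : Matrix m m ℝ) with hUdef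
  have hU : U * star U = 1 := (Matrix.mem_unitaryGroup_iff).mp hA.eigenvectorUnitary.2
  have hU' : star U * U = 1 := (Matrix.mem_unitaryGroup_iff').mp hA.eigenvectorUnitary.2
  have hspec : A = U * diagonal (RCLike.ofReal ∘ hA.eigenvalues) * star U := hA.spectral_theorem
  have h0 : aeval A q = aeval (U * diagonal (RCLike.ofReal ∘ hA.eigenvalues) * star U) q :=
    congrArg (fun M : Matrix m m ℝ => aeval M q) hspec
  have h1 : aeval A q = U * diagonal (fun j => q.eval (hA.eigenvalues j)) * star U := by
    rw [h0, my_conj_aeval U _ hU hU', my_aeval_diagonal]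
    congr 1
  rw [h1]
  rw [Matrix.mul_assoc, Matrix.mul_apply]
  congr 1
  funext j
  rw [Matrix.diagonal_mul, Matrix.star_apply, star_trivial]
  ring

set_option maxHeartbeats 1600000 in
theorem stmt_13 {n k δ r : ℕ} (hn : 0 < n) (G : SimpleGraph (Fin n))
    (hconn : G.Connected) (hreg : G.IsRegularOfDegree δ)
    (hA : (G.adjMatrix ℝ).IsHermitian)
    (eig : Fin n → ℝ) (hmono : Antitone eig)
    (hperm : ∃ σ : Equiv.Perm (Fin n), eig = hA.eigenvalues ∘ σ)
    (heig0 : eig ⟨0, hn⟩ = δ)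
    (hr : 2 ≤ r)
    (hex : ∃ s : Finset (Fin n),
      (∀ u ∈ s, ∀ v ∈ s, u ≠ v → ∀ w : G.Walk u v, k < w.length) ∧ s.card = r)
    (p : Polynomial ℝ) (hp : p.natDegree ≤ k)
    (Lam lam : ℝ)
    (hLam : IsGreatest {x : ℝ | ∃ i : Fin n, (i : ℕ) ≠ 0 ∧ x = p.eval (eig i)} Lam)
    (hlam : IsLeast {x : ℝ | ∃ i : Fin n, (i : ℕ) ≠ 0 ∧ x = p.eval (eig i)} lam)
    (hLampos : 0 < Lam) (hlamneg : lam < 0)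
    (hpLam : Lam ≤ p.eval (eig ⟨0, hn⟩))
    (hcond : |lam| * ((r : ℝ) - 1) ≤ Lam) :
    (r : ℝ) ≤ 1 + Lam / p.eval (eig ⟨0, hn⟩) * ((n : ℝ) - 1) := by
  obtain ⟨σ, hσ⟩ := hperm
  obtain ⟨s, hs, hcard⟩ := hex
  set i0 : Fin n := ⟨0, hn⟩ with hi0
  set A : Matrix (Fin n) (Fin n) ℝ := G.adjMatrix ℝ with hAdef
  set U : Matrix (Fin n) (Fin n) ℝ := (hA.eigenvectorUnitary : Matrix (Fin n) (Fin n) ℝ)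
    with hUdef
  set W : Fin n → Fin n → ℝ := fun j u => U u j with hWdef
  set ev : Fin n → ℝ := hA.eigenvalues with hevdef
  have hev : ∀ i, ev (σ i) = eig i := fun i => by rw [hσ]; rfl
  -- entrywise functional calculus
  have hentry : ∀ (q : ℝ[X]) (u v : Fin n),
      (aeval A q) u v = ∑ j, q.eval (ev j) * (W j u * W j v) := fun q u v => my_entry hA q u v
  -- zero entries on the independent set
  have hzero : ∀ u ∈ s, ∀ v ∈ s, u ≠ v → (aeval A p) u v = 0 := by
    intro u hu v hv huv
    rw [p.aeval_eq_sum_range, Matrix.sum_apply]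
    refine Finset.sum_eq_zero fun i hi => ?_
    rw [Matrix.smul_apply, hAdef, SimpleGraph.adjMatrix_pow_apply_eq_card_walk]
    have : IsEmpty {w : G.Walk u v | w.length = i} := by
      constructor
      rintro ⟨w, hw⟩
      have h1 := hs u hu v hv huv w
      have h2 : w.length = i := hw
      have h3 : i ≤ k := le_trans (Nat.lt_succ_iff.mp (Finset.mem_range.mp hi)) hp
      omega
    have hc : Fintype.card {w : G.Walk u v // w.length = i} = 0 := @Fintype.card_eq_zero _ _ this
    simp [hc]
  -- resolution of identity
  have hid : ∀ u v : Fin n, ∑ j, W j u * W j v = (1 : Matrix (Fin n) (Fin n) ℝ) u v := by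
    intro u v
    have := hentry 1 u v
    simpa using this.symm
  have hid' : ∀ u : Fin n, ∑ j, (W j u)^2 = 1 := by
    intro u
    have := hid u u
    simp only [Matrix.one_apply_eq] at this
    simpa [sq] using this
  -- key identities
  have e1 : ∑ u ∈ s, ∑ v ∈ s, (aeval A p) u v
      = ∑ j, p.eval (ev j) * (∑ u ∈ s, W j u)^2 := by
    have step : ∀ j, p.eval (ev j) * (∑ u ∈ s, W j u)^2
        = ∑ u ∈ s, ∑ v ∈ s, p.eval (ev j) * (W j u * W j v) := by
      intro j
      rw [sq, Finset.sum_mul_sum, Finset.mul_sum]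
      exact Finset.sum_congr rfl fun u _ => by rw [Finset.mul_sum]
    calc ∑ u ∈ s, ∑ v ∈ s, (aeval A p) u v
        = ∑ u ∈ s, ∑ v ∈ s, ∑ j, p.eval (ev j) * (W j u * W j v) := by
          exact Finset.sum_congr rfl fun u _ => Finset.sum_congr rfl fun v _ => hentry p u v
      _ = ∑ u ∈ s, ∑ j, ∑ v ∈ s, p.eval (ev j) * (W j u * W j v) := by
          exact Finset.sum_congr rfl fun u _ => Finset.sum_comm
      _ = ∑ j, ∑ u ∈ s, ∑ v ∈ s, p.eval (ev j) * (W j u * W j v) := Finset.sum_comm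
      _ = ∑ j, p.eval (ev j) * (∑ u ∈ s, W j u)^2 :=
          Finset.sum_congr rfl fun j _ => (step j).symm
  have e2 : ∑ u ∈ s, (aeval A p) u u
      = ∑ j, p.eval (ev j) * ∑ u ∈ s, (W j u)^2 := by
    calc ∑ u ∈ s, (aeval A p) u u
        = ∑ u ∈ s, ∑ j, p.eval (ev j) * (W j u)^2 := by
          exact Finset.sum_congr rfl fun u _ => by rw [hentry p u u]; simp [sq]
      _ = ∑ j, ∑ u ∈ s, p.eval (ev j) * (W j u)^2 := Finset.sum_comm
      _ = ∑ j, p.eval (ev j) * ∑ u ∈ s, (W j u)^2 := by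
          exact Finset.sum_congr rfl fun j _ => (Finset.mul_sum _ _ _).symm
  have e3 : ∑ u ∈ s, ∑ v ∈ s, (aeval A p) u v = ∑ u ∈ s, (aeval A p) u u := by
    refine Finset.sum_congr rfl fun u hu => ?_
    refine Finset.sum_eq_single_of_mem u hu fun v hv hvu => hzero u hu v hv (fun h => hvu h.symm)
  have key0 : ∑ j, p.eval (ev j) * ((∑ u ∈ s, W j u)^2 - ∑ u ∈ s, (W j u)^2) = 0 := by
    have h := (e1.symm.trans e3).trans e2
    simp only [mul_sub, Finset.sum_sub_distrib]
    rw [sub_eq_zero]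
    exact h
  have hbsum : ∑ j, ∑ u ∈ s, (W j u)^2 = (r : ℝ) := by
    rw [Finset.sum_comm]
    rw [Finset.sum_congr rfl fun u _ => hid' u]
    simp [hcard]
  set C : Fin n → ℝ := fun i => ∑ u ∈ s, W (σ i) u with hCdef
  set B : Fin n → ℝ := fun i => ∑ u ∈ s, (W (σ i) u)^2 with hBdef
  have key : ∑ i, p.eval (eig i) * ((C i)^2 - B i) = 0 := by
    calc ∑ i, p.eval (eig i) * ((C i)^2 - B i)
        = ∑ i, p.eval (ev (σ i)) * ((∑ u ∈ s, W (σ i) u)^2 - ∑ u ∈ s, (W (σ i) u)^2) :=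
          Finset.sum_congr rfl fun i _ => by rw [hev]
      _ = ∑ j, p.eval (ev j) * ((∑ u ∈ s, W j u)^2 - ∑ u ∈ s, (W j u)^2) :=
          Equiv.sum_comp σ (fun j => p.eval (ev j) * ((∑ u ∈ s, W j u)^2 - ∑ u ∈ s, (W j u)^2))
      _ = 0 := key0
  have hBsum : ∑ i, B i = (r : ℝ) :=
    (Equiv.sum_comp σ (fun j => ∑ u ∈ s, (W j u)^2)).trans hbsum
  have hBnn : ∀ i, 0 ≤ B i := fun i => Finset.sum_nonneg fun _ _ => sq_nonneg _
  have hrn : (r : ℝ) ≤ n := by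
    have h := Finset.card_le_univ s
    simp [hcard] at h
    exact_mod_cast h
  rcases eq_or_lt_of_le hpLam with heq | hlt
  · rw [← heq, div_self hLampos.ne']
    linarith
  · -- main case : Lam < p.eval (eig i0)
    have hPpos : 0 < p.eval (eig i0) := lt_trans hLampos hlt
    have hvne : ∀ i : Fin n, i ≠ i0 → (i : ℕ) ≠ 0 := by
      intro i hi h
      exact hi (Fin.ext (by simpa using h))
    have hmem : ∀ i : Fin n, i ≠ i0 → p.eval (eig i) ≤ Lam :=
      fun i hi => hLam.2 ⟨i, hvne i hi, rfl⟩
    have hglam : ∀ i : Fin n, i ≠ i0 → lam ≤ p.eval (eig i) :=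
      fun i hi => hlam.2 ⟨i, hvne i hi, rfl⟩
    have hne : ∀ i : Fin n, i ≠ i0 → ev (σ i) ≠ (δ : ℝ) := by
      intro i hi h
      rw [hev] at h
      have h2 : p.eval (eig i) = p.eval (eig i0) := by rw [h, heig0]
      exact absurd (h2 ▸ hmem i hi) (not_le.mpr hlt)
    -- column sums of A are δ
    have hAcol : ∀ t : Fin n, ∑ v, A v t = (δ : ℝ) := by
      intro t
      have h1 : ∀ v, A v t = A t v := fun v => by
        simp [hAdef, SimpleGraph.adjMatrix_apply, G.adj_comm]
      calc ∑ v, A v t = ∑ v, A t v := Finset.sum_congr rfl fun v _ => h1 v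
        _ = ((univ.filter (fun v => G.Adj t v)).card : ℝ) := by
            simp [hAdef, SimpleGraph.adjMatrix_apply, Finset.sum_boole]
        _ = (δ : ℝ) := by
            have : univ.filter (fun v => G.Adj t v) = G.neighborFinset t := by
              ext v; simp [SimpleGraph.mem_neighborFinset]
            rw [this, SimpleGraph.card_neighborFinset_eq_degree, hreg t]
    have hU1 : U * star U = 1 := (Matrix.mem_unitaryGroup_iff).mp hA.eigenvectorUnitary.2
    have hU2 : star U * U = 1 := (Matrix.mem_unitaryGroup_iff').mp hA.eigenvectorUnitary.2
    have hAU : A * U = U * diagonal (RCLike.ofReal ∘ ev) := by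
      calc A * U = (U * diagonal (RCLike.ofReal ∘ ev) * star U) * U := by
            have hspec : A = U * diagonal (RCLike.ofReal ∘ ev) * star U := hA.spectral_theorem
            rw [← hspec]
        _ = U * diagonal (RCLike.ofReal ∘ ev) * (star U * U) := by
            rw [Matrix.mul_assoc]
        _ = U * diagonal (RCLike.ofReal ∘ ev) := by rw [hU2, Matrix.mul_one]
    have hWcol : ∀ j : Fin n, (δ : ℝ) * (∑ v, W j v) = ev j * (∑ v, W j v) := by
      intro j
      have h := congrArg (fun M : Matrix (Fin n) (Fin n) ℝ => ∑ v, M v j) hAU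
      simp only [Matrix.mul_apply] at h
      have hl : ∑ v, ∑ t, A v t * U t j = (δ : ℝ) * ∑ v, W j v := by
        rw [Finset.sum_comm]
        calc ∑ t, ∑ v, A v t * U t j = ∑ t, (∑ v, A v t) * U t j := by
              exact Finset.sum_congr rfl fun t _ => (Finset.sum_mul _ _ _).symm
          _ = ∑ t, (δ : ℝ) * U t j := Finset.sum_congr rfl fun t _ => by rw [hAcol]
          _ = (δ : ℝ) * ∑ v, W j v := by rw [← Finset.mul_sum]
      have hr' : ∑ v, ∑ t, U v t * diagonal (RCLike.ofReal ∘ ev) t j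
          = ev j * ∑ v, W j v := by
        have hd : ∀ v, ∑ t, U v t * diagonal (RCLike.ofReal ∘ ev) t j = U v j * ev j := by
          intro v
          refine (Finset.sum_eq_single_of_mem j (Finset.mem_univ j)
            (fun t _ htj => ?_)).trans ?_
          · rw [Matrix.diagonal_apply_ne _ htj, mul_zero]
          · rw [Matrix.diagonal_apply_eq]
            simp [RCLike.ofReal_real_eq_id]
        rw [Finset.sum_congr rfl fun v _ => hd v, ← Finset.sum_mul, mul_comm]
      rw [← hl, ← hr']
      exact h
    have hzerocol : ∀ i : Fin n, i ≠ i0 → (∑ v, W (σ i) v) = 0 := by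
      intro i hi
      by_contra hS
      exact hne i hi (mul_right_cancel₀ hS (hWcol (σ i))).symm
    set q0 : ℝ := ∑ v, W (σ i0) v with hq0def
    have hone : ∀ u, W (σ i0) u * q0 = 1 := by
      intro u
      have h1 : (1 : ℝ) = ∑ v, (1 : Matrix (Fin n) (Fin n) ℝ) u v := by
        simp [Matrix.one_apply]
      have h2 : ∑ v, (1 : Matrix (Fin n) (Fin n) ℝ) u v = ∑ j, W j u * (∑ v, W j v) := by
        calc ∑ v, (1 : Matrix (Fin n) (Fin n) ℝ) u v
            = ∑ v, ∑ j, W j u * W j v := Finset.sum_congr rfl fun v _ => (hid u v).symm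
          _ = ∑ j, ∑ v, W j u * W j v := Finset.sum_comm
          _ = ∑ j, W j u * (∑ v, W j v) :=
              Finset.sum_congr rfl fun j _ => (Finset.mul_sum _ _ _).symm
      have h3 : ∑ j, W j u * (∑ v, W j v) = W (σ i0) u * q0 := by
        rw [← Equiv.sum_comp σ (fun j => W j u * (∑ v, W j v))]
        exact Finset.sum_eq_single_of_mem i0 (Finset.mem_univ i0)
          (fun i _ hi => by rw [hzerocol i hi, mul_zero])
      rw [← h3, ← h2, ← h1]
    have hq2 : q0 * q0 = (n : ℝ) := by
      have h1 : ∑ u : Fin n, W (σ i0) u * q0 = (n : ℝ) := by simp [hone]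
      rw [← h1, ← Finset.sum_mul, ← hq0def]
    have hq0 : q0 ≠ 0 := by
      intro h
      have := hone ⟨0, hn⟩
      rw [h, mul_zero] at this
      exact zero_ne_one this
    have hW0 : ∀ u, W (σ i0) u = 1 / q0 := by
      intro u
      rw [eq_div_iff hq0]
      exact hone u
    have hB0n : B i0 * n = (r : ℝ) := by
      have h1 : B i0 = (r : ℝ) * (1/q0)^2 := by
        have h2 : B i0 = ∑ u ∈ s, (1/q0 : ℝ)^2 :=
          Finset.sum_congr rfl fun u _ => by rw [hW0]
        rw [h2, Finset.sum_const, hcard, nsmul_eq_mul]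
      rw [h1, ← hq2]
      field_simp
    have hC0n : (C i0)^2 * n = (r : ℝ)^2 := by
      have hC0 : C i0 * q0 = (r : ℝ) := by
        have h2 : C i0 * q0 = ∑ u ∈ s, W (σ i0) u * q0 := Finset.sum_mul _ _ _
        rw [h2, Finset.sum_congr rfl fun u _ => hone u]
        simp [hcard]
      have : (C i0)^2 * (q0 * q0) = (r : ℝ)^2 := by
        rw [← hC0]; ring
      rwa [hq2] at this
    -- split the key sum
    have hsplit : p.eval (eig i0) * ((C i0)^2 - B i0)
        + ∑ i ∈ univ.erase i0, p.eval (eig i) * ((C i)^2 - B i) = 0 := by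
      exact (Finset.add_sum_erase univ
        (fun i => p.eval (eig i) * ((C i)^2 - B i)) (Finset.mem_univ i0)).trans key
    have hBsplit : B i0 + ∑ i ∈ univ.erase i0, B i = (r : ℝ) := by
      exact (Finset.add_sum_erase univ B (Finset.mem_univ i0)).trans hBsum
    have hr' : (2 : ℝ) ≤ r := by exact_mod_cast hr
    have hterm : ∀ i ∈ univ.erase i0, -(Lam * B i) ≤ p.eval (eig i) * ((C i)^2 - B i) := by
      intro i hi
      have hii0 : i ≠ i0 := (Finset.mem_erase.mp hi).1
      have h1 := hmem i hii0
      have h2 := hglam i hii0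
      have hB := hBnn i
      have hCS : (C i)^2 ≤ (r : ℝ) * B i := by
        have h := sq_sum_le_card_mul_sum_sq (s := s) (f := fun u => W (σ i) u)
        rw [hcard] at h
        exact_mod_cast h
      have habs : -lam * ((r : ℝ) - 1) ≤ Lam := by rwa [abs_of_neg hlamneg] at hcond
      rcases le_or_gt 0 (p.eval (eig i)) with hP | hP
      · linarith [mul_nonneg hP (sq_nonneg (C i)), mul_nonneg (sub_nonneg.mpr h1) hB]
      · have hc2 : (C i)^2 - B i ≤ ((r : ℝ) - 1) * B i := by nlinarith
        have hk1 : p.eval (eig i) * (((r : ℝ) - 1) * B i)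
            ≤ p.eval (eig i) * ((C i)^2 - B i) :=
          mul_le_mul_of_nonpos_left hc2 hP.le
        have hk2 : lam * (((r : ℝ) - 1) * B i) ≤ p.eval (eig i) * (((r : ℝ) - 1) * B i) :=
          mul_le_mul_of_nonneg_right h2
            (mul_nonneg (by linarith : (0:ℝ) ≤ (r : ℝ) - 1) hB)
        have hk3 : -Lam * B i ≤ lam * (((r : ℝ) - 1) * B i) := by
          nlinarith [mul_le_mul_of_nonneg_right habs hB]
        linarith
    have hmain : p.eval (eig i0) * ((C i0)^2 - B i0) ≤ Lam * ((r : ℝ) - B i0) := by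
      have h1 : ∑ i ∈ univ.erase i0, -(Lam * B i)
          ≤ ∑ i ∈ univ.erase i0, p.eval (eig i) * ((C i)^2 - B i) :=
        Finset.sum_le_sum hterm
      have hBe : ∑ i ∈ univ.erase i0, B i = (r : ℝ) - B i0 := by linarith
      have h2 : ∑ i ∈ univ.erase i0, -(Lam * B i) = -(Lam * ((r : ℝ) - B i0)) := by
        rw [← hBe, Finset.mul_sum, ← Finset.sum_neg_distrib]
      linarith [hsplit, h1, h2 ▸ h1]
    -- clear denominators
    have hn' : (0 : ℝ) < n := by exact_mod_cast hn
    have hSn : ((C i0)^2 - B i0) * n = (r : ℝ)^2 - r := by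
      rw [sub_mul, hC0n, hB0n]
    have hTn : ((r : ℝ) - B i0) * n = (r : ℝ) * n - r := by
      rw [sub_mul, hB0n]
    have hfin : p.eval (eig i0) * ((r : ℝ)^2 - r) ≤ Lam * ((r : ℝ) * n - r) := by
      have h := mul_le_mul_of_nonneg_right hmain hn'.le
      rw [mul_assoc, mul_assoc, hSn, hTn] at h
      exact h
    have hrpos : (0 : ℝ) < r := by linarith
    have hstep : ((r : ℝ) - 1) * p.eval (eig i0) ≤ Lam * ((n : ℝ) - 1) := by
      refine le_of_mul_le_mul_right ?_ hrpos
      nlinarith [hfin]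
    rw [div_mul_eq_mul_div, ← sub_le_iff_le_add', le_div_iff₀ hPpos]
    linarith [hstep]
end

section
/- Let G be a regular graph on n vertices with distinct eigenvalues θ₀ > ⋯ > θ_d, k ≤ d−1, and let P_k be a polynomial of degree at most k with |P_k(θᵢ)| ≤ 1 for all i = 1, …, d. If P_k(θ₀) > n − 1, then the diameter of G is at most k. -/
open Polynomial Matrix
open scoped Classical


lemma my_sum_mulVec {n : ℕ} {ι : Type*} (s : Finset ι) (M : ι → Matrix (Fin n) (Fin n) ℝ)
    (x : Fin n → ℝ) : (∑ i ∈ s, M i) *ᵥ x = ∑ i ∈ s, (M i *ᵥ x) := by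
  ext u
  simp only [Matrix.mulVec, dotProduct, Finset.sum_apply, Finset.sum_mul,
    Matrix.sum_apply]
  rw [Finset.sum_comm]

lemma aeval_mulVec {n : ℕ} (A : Matrix (Fin n) (Fin n) ℝ) (x : Fin n → ℝ) (μ : ℝ)
    (h : A *ᵥ x = μ • x) (P : Polynomial ℝ) :
    (aeval A P) *ᵥ x = P.eval μ • x := by
  have hpow : ∀ m : ℕ, (A ^ m) *ᵥ x = μ ^ m • x := by
    intro m
    induction m with
    | zero => simp
    | succ m ih =>
      rw [pow_succ', ← Matrix.mulVec_mulVec, ih, Matrix.mulVec_smul, h, smul_smul, ← pow_succ]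
  rw [aeval_eq_sum_range, Polynomial.eval_eq_sum_range, my_sum_mulVec, Finset.sum_smul]
  refine Finset.sum_congr rfl fun i _ => ?_
  rw [smul_mulVec, hpow, smul_smul]

lemma entry_zero {n k : ℕ} (G : SimpleGraph (Fin n)) (u v : Fin n)
    (P : Polynomial ℝ) (hP : P.natDegree ≤ k) (hd : k < G.dist u v) :
    (aeval (G.adjMatrix ℝ) P) u v = 0 := by
  have hpow : ∀ m : ℕ, m ≤ k → (G.adjMatrix ℝ ^ m) u v = 0 := by
    intro m hm
    rw [SimpleGraph.adjMatrix_pow_apply_eq_card_walk]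
    norm_cast
    rw [Fintype.card_eq_zero_iff]
    constructor
    rintro ⟨p, hp⟩
    simp only [Set.mem_setOf_eq] at hp
    have := SimpleGraph.dist_le p
    omega
  rw [aeval_eq_sum_range]
  rw [show ((∑ i ∈ Finset.range (P.natDegree + 1), P.coeff i • G.adjMatrix ℝ ^ i) u v)
      = ∑ i ∈ Finset.range (P.natDegree + 1), P.coeff i • ((G.adjMatrix ℝ ^ i) u v) by
    rw [Matrix.sum_apply]; rfl]
  refine Finset.sum_eq_zero fun i hi => ?_
  rw [Finset.mem_range] at hi
  rw [hpow i (by omega), smul_zero]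

lemma perron_const {n δ : ℕ} (G : SimpleGraph (Fin n)) (hconn : G.Connected)
    (hreg : G.IsRegularOfDegree δ) (x : Fin n → ℝ)
    (h : G.adjMatrix ℝ *ᵥ x = (δ : ℝ) • x) : ∀ v w : Fin n, x v = x w := by
  have hne : Nonempty (Fin n) := hconn.nonempty
  obtain ⟨i, -, hi⟩ := Finset.exists_max_image Finset.univ x ⟨Classical.arbitrary _, Finset.mem_univ _⟩
  have key : ∀ a b : Fin n, G.Adj a b → x a = x i → x b = x i := by
    intro a b hab ha
    by_contra hb
    have hb' : x b < x i := lt_of_le_of_ne (hi b (Finset.mem_univ b)) hb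
    have hsum : ∑ w ∈ G.neighborFinset a, x w = (δ : ℝ) * x a := by
      have := congrFun h a
      rw [SimpleGraph.adjMatrix_mulVec_apply] at this
      simpa using this
    have hlt : ∑ w ∈ G.neighborFinset a, x w < ∑ w ∈ G.neighborFinset a, x i := by
      refine Finset.sum_lt_sum (fun w _ => hi w (Finset.mem_univ w)) ⟨b, ?_, hb'⟩
      rwa [SimpleGraph.mem_neighborFinset]
    rw [Finset.sum_const, show (G.neighborFinset a).card = δ from hreg a, nsmul_eq_mul, hsum,
      ha] at hlt
    exact lt_irrefl _ hlt
  have aux : ∀ (a v : Fin n) (p : G.Walk a v), x a = x i → x v = x i := by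
    intro a v p
    induction p with
    | nil => exact fun h => h
    | @cons a b c hadj p ih => exact fun ha => ih (key a b hadj ha)
  have main : ∀ v : Fin n, x v = x i := by
    intro v
    obtain ⟨p⟩ := hconn.preconnected i v
    exact aux i v p rfl
  intro v w; rw [main v, main w]

lemma eig_le {n δ : ℕ} (G : SimpleGraph (Fin n)) (hreg : G.IsRegularOfDegree δ)
    (x : Fin n → ℝ) (hx : x ≠ 0) (μ : ℝ)
    (h : G.adjMatrix ℝ *ᵥ x = μ • x) : μ ≤ (δ : ℝ) := by
  have hne : Nonempty (Fin n) := by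
    by_contra hn
    exact hx (funext fun w => absurd ⟨w⟩ hn)
  obtain ⟨i, -, hi⟩ := Finset.exists_max_image Finset.univ (fun w => |x w|)
    ⟨Classical.arbitrary _, Finset.mem_univ _⟩
  have hxi : 0 < |x i| := by
    rcases Function.ne_iff.mp hx with ⟨w, hw⟩
    exact lt_of_lt_of_le (abs_pos.mpr hw) (hi w (Finset.mem_univ w))
  have hsum : ∑ w ∈ G.neighborFinset i, x w = μ * x i := by
    have := congrFun h i
    rw [SimpleGraph.adjMatrix_mulVec_apply] at this
    simpa using this
  have habs : |μ| * |x i| ≤ (δ : ℝ) * |x i| := by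
    rw [← abs_mul, ← hsum]
    calc |∑ w ∈ G.neighborFinset i, x w| ≤ ∑ w ∈ G.neighborFinset i, |x w| :=
          Finset.abs_sum_le_sum_abs _ _
      _ ≤ ∑ w ∈ G.neighborFinset i, |x i| :=
          Finset.sum_le_sum fun w _ => hi w (Finset.mem_univ w)
      _ = (δ : ℝ) * |x i| := by
          rw [Finset.sum_const, show (G.neighborFinset i).card = δ from hreg i, nsmul_eq_mul]
  have : |μ| ≤ (δ : ℝ) := le_of_mul_le_mul_right habs hxi
  exact le_trans (le_abs_self μ) this

lemma inner_eucl {n : ℕ} (a b : EuclideanSpace ℝ (Fin n)) :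
    (inner ℝ a b : ℝ) = ∑ i, a i * b i := by
  simp [PiLp.inner_apply, RCLike.inner_apply, conj_trivial, mul_comm]

lemma symm_dot {n : ℕ} (A : Matrix (Fin n) (Fin n) ℝ) (hA : A.IsHermitian)
    (a b : Fin n → ℝ) : ∑ i, (A *ᵥ a) i * b i = ∑ i, a i * (A *ᵥ b) i := by
  simp only [Matrix.mulVec, dotProduct, Finset.sum_mul, Finset.mul_sum]
  rw [Finset.sum_comm]
  refine Finset.sum_congr rfl fun i _ => Finset.sum_congr rfl fun j _ => ?_
  have := hA.apply i j
  simp only [star_trivial] at this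
  rw [← this]; ring

lemma eigen_mem {n : ℕ} (A : Matrix (Fin n) (Fin n) ℝ) (hA : A.IsHermitian)
    (x : EuclideanSpace ℝ (Fin n)) (hx : x ≠ 0) (t : ℝ)
    (h : A *ᵥ x = t • (x : Fin n → ℝ)) : ∃ j, hA.eigenvalues j = t := by
  by_contra hno
  push_neg at hno
  apply hx
  have hrep : ∀ j, hA.eigenvectorBasis.repr x j = 0 := by
    intro j
    have hc : hA.eigenvectorBasis.repr x j = inner ℝ (hA.eigenvectorBasis j) x :=
      hA.eigenvectorBasis.repr_apply_apply x j
    have h1 : hA.eigenvalues j * inner ℝ (hA.eigenvectorBasis j) x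
        = t * inner ℝ (hA.eigenvectorBasis j) x := by
      simp only [inner_eucl, Finset.mul_sum]
      calc ∑ i, hA.eigenvalues j * (hA.eigenvectorBasis j i * x i)
          = ∑ i, (A *ᵥ ⇑(hA.eigenvectorBasis j)) i * x i := by
            rw [hA.mulVec_eigenvectorBasis j]
            refine Finset.sum_congr rfl fun i _ => ?_
            simp [mul_assoc]
        _ = ∑ i, hA.eigenvectorBasis j i * (A *ᵥ (x : Fin n → ℝ)) i := symm_dot A hA _ _
        _ = ∑ i, t * (hA.eigenvectorBasis j i * x i) := by
            rw [h]
            refine Finset.sum_congr rfl fun i _ => ?_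
            simp; ring
    have : inner ℝ (hA.eigenvectorBasis j) x = (0 : ℝ) := by
      by_contra hnz
      exact hno j (mul_right_cancel₀ hnz h1)
    rw [hc, this]
  have := hA.eigenvectorBasis.repr.map_eq_zero_iff (x := x)
  apply this.mp
  ext j
  exact hrep j

lemma complete_rows {n : ℕ} {A : Matrix (Fin n) (Fin n) ℝ} (hA : A.IsHermitian)
    (v i : Fin n) :
    ∑ j, hA.eigenvectorBasis j v * hA.eigenvectorBasis j i = (if i = v then (1:ℝ) else 0) := by
  have := hA.eigenvectorBasis.sum_inner_mul_inner
    (EuclideanSpace.single v (1:ℝ)) (EuclideanSpace.single i (1:ℝ))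
  rw [show (inner ℝ (EuclideanSpace.single v (1:ℝ)) (EuclideanSpace.single i (1:ℝ)) : ℝ)
      = (if i = v then (1:ℝ) else 0) by
    rw [inner_eucl]
    simp [EuclideanSpace.single_apply, eq_comm]] at this
  rw [← this]
  refine Finset.sum_congr rfl fun j _ => ?_
  rw [inner_eucl, inner_eucl]
  simp [EuclideanSpace.single_apply]

lemma entry_decomp {n : ℕ} {A : Matrix (Fin n) (Fin n) ℝ} (hA : A.IsHermitian)
    (P : Polynomial ℝ) (u v : Fin n) :
    (aeval A P) u v = ∑ j, P.eval (hA.eigenvalues j) *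
      (hA.eigenvectorBasis j u * hA.eigenvectorBasis j v) := by
  have hsingle : (Pi.single v (1:ℝ)) =
      ∑ j, hA.eigenvectorBasis j v • ⇑(hA.eigenvectorBasis j) := by
    funext i
    rw [Finset.sum_apply, Pi.single_apply, ← complete_rows hA v i]
    simp [mul_comm]
  have h1 : (aeval A P) u v = ((aeval A P) *ᵥ Pi.single v (1:ℝ)) u := by
    simp [Matrix.mulVec_single]
  rw [h1, hsingle, ← Matrix.mulVecLin_apply, map_sum, Finset.sum_apply]
  refine Finset.sum_congr rfl fun j _ => ?_
  rw [LinearMap.map_smul, Matrix.mulVecLin_apply,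
    aeval_mulVec A _ _ (hA.mulVec_eigenvectorBasis j) P]
  simp; ring

theorem stmt_15 {n d δ k : ℕ} (G : SimpleGraph (Fin n))
    (hconn : G.Connected) (hreg : G.IsRegularOfDegree δ)
    (hA : (G.adjMatrix ℝ).IsHermitian)
    (θ : Fin (d + 1) → ℝ) (hθ : StrictAnti θ)
    (hrange : Set.range hA.eigenvalues = Set.range θ)
    (hk : k + 1 ≤ d)
    (P : Polynomial ℝ) (hP : P.natDegree ≤ k)
    (hPsmall : ∀ i : Fin (d + 1), (i : ℕ) ≠ 0 → |P.eval (θ i)| ≤ 1)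
    (hP0 : (n : ℝ) - 1 < P.eval (θ 0)) :
    ∀ u v : Fin n, G.dist u v ≤ k := by
  intro u v
  by_contra hcon
  push_neg at hcon
  set A := G.adjMatrix ℝ with hAdef
  set B := hA.eigenvectorBasis with hBdef
  set μ := hA.eigenvalues with hμdef
  have hn : 0 < n := u.pos
  have hnpos : (0:ℝ) < n := by exact_mod_cast hn
  -- the constant 1 vector is a δ-eigenvector
  have hone : A *ᵥ (Function.const (Fin n) (1:ℝ)) = (δ:ℝ) • Function.const (Fin n) (1:ℝ) := by
    funext w
    rw [SimpleGraph.adjMatrix_mulVec_const_apply_of_regular hreg]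
    simp
  -- δ is one of the eigenvalues
  obtain ⟨j0, hj0⟩ : ∃ j0, μ j0 = (δ : ℝ) := by
    refine eigen_mem A hA (WithLp.toLp 2 (Function.const (Fin n) (1:ℝ))) ?_ (δ:ℝ) hone
    intro hzero
    have h0 : (WithLp.toLp 2 (Function.const (Fin n) (1:ℝ))) u = 0 := by rw [hzero]; rfl
    exact one_ne_zero h0
  -- every eigenvalue is at most δ
  have hle : ∀ j, μ j ≤ (δ : ℝ) := by
    intro j
    refine eig_le G hreg ⇑(B j) ?_ (μ j) (hA.mulVec_eigenvectorBasis j)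
    intro hzero
    exact B.orthonormal.ne_zero j (by ext i; exact congrFun hzero i)
  -- θ 0 = δ
  have hθ0 : θ 0 = (δ : ℝ) := by
    obtain ⟨j1, hj1⟩ : θ 0 ∈ Set.range μ := by rw [hrange]; exact ⟨0, rfl⟩
    obtain ⟨i1, hi1⟩ : (δ:ℝ) ∈ Set.range θ := by rw [← hrange]; exact ⟨j0, hj0⟩
    have h3 : θ i1 ≤ θ 0 := hθ.antitone (Fin.zero_le i1)
    have h4 : θ 0 ≤ (δ:ℝ) := hj1 ▸ hle j1
    rw [hi1] at h3
    linarith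
  -- the j0 eigenvector is constant
  have hconst : ∀ i i' : Fin n, B j0 i = B j0 i' :=
    perron_const G hconn hreg ⇑(B j0) (by rw [← hj0]; exact hA.mulVec_eigenvectorBasis j0)
  obtain ⟨c, hcdef⟩ : ∃ c : ℝ, ∀ i, B j0 i = c := ⟨B j0 u, fun i => hconst i u⟩
  -- column norms
  have hcol : ∀ j, ∑ i, B j i * B j i = 1 := by
    intro j
    have h1 : (inner ℝ (B j) (B j) : ℝ) = 1 := by
      rw [real_inner_self_eq_norm_sq, B.orthonormal.1 j]; norm_num
    rw [← h1, inner_eucl]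
  have hc2 : (n : ℝ) * (c * c) = 1 := by
    have h1 := hcol j0
    rw [Finset.sum_congr rfl (fun i _ => by rw [hcdef i]), Finset.sum_const] at h1
    simpa [Finset.card_univ, nsmul_eq_mul] using h1
  have hcne : c ≠ 0 := by
    intro h; rw [h] at hc2; simp at hc2
  have hcpos : 0 < c * c := by
    rcases hcne.lt_or_gt with h | h
    · exact mul_pos_of_neg_of_neg h h
    · exact mul_pos h h
  -- for j ≠ j0 the eigenvalue differs from θ 0
  have hμne : ∀ j, j ≠ j0 → μ j ≠ θ 0 := by
    intro j hj hμj
    have hconst' : ∀ i i' : Fin n, B j i = B j i' :=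
      perron_const G hconn hreg ⇑(B j)
        (by rw [show ((δ:ℝ) • ⇑(B j)) = μ j • ⇑(B j) by rw [← hθ0, ← hμj]]
            exact hA.mulVec_eigenvectorBasis j)
    obtain ⟨c', hc'def⟩ : ∃ c' : ℝ, ∀ i, B j i = c' := ⟨B j u, fun i => hconst' i u⟩
    have hc'2 : (n : ℝ) * (c' * c') = 1 := by
      have h1 := hcol j
      rw [Finset.sum_congr rfl (fun i _ => by rw [hc'def i]), Finset.sum_const] at h1
      simpa [Finset.card_univ, nsmul_eq_mul] using h1
    have horth : (inner ℝ (B j0) (B j) : ℝ) = 0 := B.orthonormal.2 (Ne.symm hj)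
    rw [inner_eucl,
      Finset.sum_congr rfl (fun i _ => by rw [hcdef i, hc'def i]),
      Finset.sum_const, nsmul_eq_mul, Finset.card_univ, Fintype.card_fin] at horth
    have h2 : c * c' = 0 := by
      rcases mul_eq_zero.mp horth with h | h
      · exact absurd h (by positivity)
      · exact h
    rcases mul_eq_zero.mp h2 with h | h
    · rw [h] at hc2; simp at hc2
    · rw [h] at hc'2; simp at hc'2
  -- |P (μ j)| ≤ 1 for j ≠ j0
  have hPbound : ∀ j, j ≠ j0 → |P.eval (μ j)| ≤ 1 := by
    intro j hj
    obtain ⟨i, hi⟩ : μ j ∈ Set.range θ := by rw [← hrange]; exact ⟨j, rfl⟩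
    have hi0 : (i : ℕ) ≠ 0 := by
      intro h0
      have hieq : i = 0 := Fin.ext h0
      rw [hieq] at hi
      exact hμne j hj hi.symm
    rw [← hi]
    exact hPsmall i hi0
  -- the key equation
  have hzero : (0:ℝ) = ∑ j, P.eval (μ j) * (B j u * B j v) := by
    rw [← entry_decomp hA P u v]
    exact (entry_zero G u v P hP hcon).symm
  set S := (Finset.univ : Finset (Fin n)).erase j0 with hSdef
  have hsplit : P.eval (μ j0) * (B j0 u * B j0 v) +
      ∑ j ∈ S, P.eval (μ j) * (B j u * B j v) = 0 := by
    have h1 := Finset.add_sum_erase Finset.univ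
      (fun j => P.eval (μ j) * (B j u * B j v)) (Finset.mem_univ j0)
    rw [← hzero] at h1
    exact h1
  have hμj0 : μ j0 = θ 0 := by rw [hj0, hθ0]
  rw [hcdef u, hcdef v, hμj0] at hsplit
  -- bound the tail sum
  have htail : P.eval (θ 0) * (c * c) ≤ ∑ j ∈ S, |B j u| * |B j v| := by
    have h1 : P.eval (θ 0) * (c * c) = -(∑ j ∈ S, P.eval (μ j) * (B j u * B j v)) := by
      linarith [hsplit]
    rw [h1]
    calc -(∑ j ∈ S, P.eval (μ j) * (B j u * B j v))
        ≤ |∑ j ∈ S, P.eval (μ j) * (B j u * B j v)| := neg_le_abs _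
      _ ≤ ∑ j ∈ S, |P.eval (μ j) * (B j u * B j v)| := Finset.abs_sum_le_sum_abs _ _
      _ ≤ ∑ j ∈ S, |B j u| * |B j v| := by
          refine Finset.sum_le_sum fun j hj => ?_
          have hjne : j ≠ j0 := Finset.ne_of_mem_erase hj
          rw [abs_mul, abs_mul]
          exact mul_le_of_le_one_left (by positivity) (hPbound j hjne)
  -- row sums over S
  have hrow : ∀ w : Fin n, ∑ j, B j w * B j w = 1 := by
    intro w
    have := complete_rows hA w w
    simpa using this
  have hrowS : ∀ w : Fin n, ∑ j ∈ S, (B j w) * (B j w) = 1 - c * c := by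
    intro w
    have h1 := hrow w
    rw [← Finset.add_sum_erase Finset.univ (fun j => B j w * B j w) (Finset.mem_univ j0),
      hcdef w] at h1
    rw [hSdef]
    linarith
  -- Cauchy-Schwarz
  have hCS : (∑ j ∈ S, |B j u| * |B j v|) ≤ 1 - c * c := by
    have h1 := Finset.sum_mul_sq_le_sq_mul_sq S (fun j => |B j u|) (fun j => |B j v|)
    have h2 : ∑ j ∈ S, |B j u| ^ 2 = 1 - c * c := by
      rw [← hrowS u]
      exact Finset.sum_congr rfl fun j _ => by rw [sq_abs]; ring
    have h3 : ∑ j ∈ S, |B j v| ^ 2 = 1 - c * c := by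
      rw [← hrowS v]
      exact Finset.sum_congr rfl fun j _ => by rw [sq_abs]; ring
    rw [h2, h3] at h1
    have h4 : (0:ℝ) ≤ ∑ j ∈ S, |B j u| * |B j v| :=
      Finset.sum_nonneg fun j _ => mul_nonneg (abs_nonneg _) (abs_nonneg _)
    have hn1 : (1:ℝ) ≤ (n:ℝ) := by exact_mod_cast hn
    have h5 : (0:ℝ) ≤ 1 - c * c := by nlinarith [hc2, hcpos, hn1]
    nlinarith
  -- final contradiction
  have hfin : P.eval (θ 0) * (c * c) ≤ 1 - c * c := le_trans htail hCS
  have hcc : c * c = 1 / (n:ℝ) := by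
    field_simp
    linarith [hc2]
  rw [hcc] at hfin
  have h6 := mul_le_mul_of_nonneg_right hfin hnpos.le
  have hne0 : (n:ℝ) ≠ 0 := ne_of_gt hnpos
  field_simp at h6
  nlinarith [hP0, h6]
end

section
/- Let G be a regular graph on n vertices with distinct eigenvalues θ₀ > ⋯ > θ_d, d ≥ 2, and let θᵢ be the largest distinct eigenvalue with θᵢ ≤ −1. If n(θ₀ + θᵢθᵢ₋₁)/((θ₀ − θᵢ)(θ₀ − θᵢ₋₁)) < 2, then G has diameter at most 2. -/
open Polynomial Matrix
open scoped Classical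

lemma conj_quad {N : ℕ} {A V : Matrix (Fin N) (Fin N) ℝ} {μ : Fin N → ℝ}
    (hV1 : star V * V = 1) (hV2 : V * star V = 1)
    (hspec : A = V * diagonal μ * star V) (a c : ℝ) :
    A * A - a • A + c • (1 : Matrix (Fin N) (Fin N) ℝ) =
      V * diagonal (fun l => μ l * μ l - a * μ l + c) * star V := by
  have key : ∀ X Y : Matrix (Fin N) (Fin N) ℝ,
      (V * X * star V) * (V * Y * star V) = V * (X * Y) * star V := by
    intro X Y
    simp only [mul_assoc]
    rw [← mul_assoc (star V) V, hV1, one_mul]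
  rw [hspec, key]
  have h1 : (1 : Matrix (Fin N) (Fin N) ℝ) = V * (1 : Matrix (Fin N) (Fin N) ℝ) * star V := by
    rw [mul_one, hV2]
  rw [h1]
  rw [show a • (V * diagonal μ * star V) = V * (a • diagonal μ) * star V by
    rw [Matrix.mul_smul, Matrix.smul_mul]]
  rw [show c • (V * 1 * star V) = V * (c • (1 : Matrix (Fin N) (Fin N) ℝ)) * star V by
    rw [Matrix.mul_smul, Matrix.smul_mul]]
  rw [← Matrix.sub_mul, ← Matrix.mul_sub, ← Matrix.add_mul, ← Matrix.mul_add]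
  congr 2
  rw [diagonal_mul_diagonal, ← diagonal_one, ← diagonal_smul, ← diagonal_smul,
    diagonal_sub, diagonal_add]
  congr 1
  funext l
  simp [smul_eq_mul]

set_option maxHeartbeats 1000000 in
theorem stmt_17 {n d δ : ℕ} (hd : 2 ≤ d) (G : SimpleGraph (Fin n))
    (hconn : G.Connected) (hreg : G.IsRegularOfDegree δ)
    (hA : (G.adjMatrix ℝ).IsHermitian)
    (θ : Fin (d + 1) → ℝ) (hθ : StrictAnti θ)
    (hrange : Set.range hA.eigenvalues = Set.range θ)
    (i j : Fin (d + 1)) (hij : (i : ℕ) = (j : ℕ) + 1)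
    (hile : θ i ≤ -1) (hmax : ∀ l : Fin (d + 1), θ l ≤ -1 → θ l ≤ θ i)
    (hbound : n * (θ 0 + θ i * θ j) / ((θ 0 - θ i) * (θ 0 - θ j)) < 2) :
    ∀ u v : Fin n, G.dist u v ≤ 2 := by
  intro u v
  by_contra hdist
  push_neg at hdist
  have hn : 0 < n := Fin.pos u
  set A := G.adjMatrix ℝ with hAdef
  set V : Matrix (Fin n) (Fin n) ℝ := (hA.eigenvectorUnitary : Matrix (Fin n) (Fin n) ℝ) with hVdef
  set μ : Fin n → ℝ := hA.eigenvalues with hμdef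
  have hV1 : star V * V = 1 := hA.eigenvectorUnitary.2.1
  have hV2 : V * star V = 1 := hA.eigenvectorUnitary.2.2
  have hspec : A = V * diagonal μ * star V := by
    have := hA.spectral_theorem
    simpa [RCLike.ofReal_real_eq_id] using this
  -- every eigenvalue equals some θ m
  have hμθ : ∀ l : Fin n, ∃ m : Fin (d + 1), μ l = θ m := by
    intro l
    have : μ l ∈ Set.range θ := hrange ▸ Set.mem_range_self l
    exact this.imp fun m hm => hm.symm
  have hθμ : ∀ m : Fin (d + 1), ∃ l : Fin n, μ l = θ m := by
    intro m
    have : θ m ∈ Set.range μ := hrange.symm ▸ Set.mem_range_self m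
    exact this
  -- graph distance facts
  have huv : u ≠ v := by
    rintro rfl
    simp [SimpleGraph.dist_self] at hdist
  have hadj : ¬ G.Adj u v := by
    intro h
    have : G.dist u v ≤ 1 := SimpleGraph.dist_le (h.toWalk)
    omega
  have hcommon : ∀ w, ¬ (G.Adj u w ∧ G.Adj w v) := by
    rintro w ⟨h1, h2⟩
    have : G.dist u v ≤ 2 := by
      have := SimpleGraph.dist_le (SimpleGraph.Walk.cons h1 (SimpleGraph.Walk.cons h2 SimpleGraph.Walk.nil))
      simpa using this
    omega
  -- row sums
  have hones : A *ᵥ (Function.const (Fin n) (1:ℝ)) = (δ : ℝ) • Function.const (Fin n) (1:ℝ) := by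
    funext w
    rw [SimpleGraph.adjMatrix_mulVec_const_apply_of_regular hreg]
    simp
  -- δ is an eigenvalue : δ ∈ range μ
  have hδmem : ∃ k, μ k = (δ : ℝ) := by
    set x : Fin n → ℝ := Function.const (Fin n) (1:ℝ) with hxdef
    set y : Fin n → ℝ := star V *ᵥ x with hydef
    have hxy : V *ᵥ y = x := by
      rw [hydef, mulVec_mulVec, hV2, one_mulVec]
    have hDy : diagonal μ *ᵥ y = (δ : ℝ) • y := by
      have h1 : V *ᵥ (diagonal μ *ᵥ y) = (δ : ℝ) • x := by
        rw [hydef, mulVec_mulVec, mulVec_mulVec, ← hspec, hones]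
      calc diagonal μ *ᵥ y = (star V * V) *ᵥ (diagonal μ *ᵥ y) := by rw [hV1, one_mulVec]
        _ = star V *ᵥ ((δ : ℝ) • x) := by rw [← mulVec_mulVec, h1]
        _ = (δ : ℝ) • y := by rw [mulVec_smul]
    have hy0 : y ≠ 0 := by
      intro h
      have : x = 0 := by rw [← hxy, h, mulVec_zero]
      have := congrFun this u
      simp [hxdef] at this
    obtain ⟨k, hk⟩ := Function.ne_iff.mp hy0
    refine ⟨k, ?_⟩
    have := congrFun hDy k
    simp only [mulVec_diagonal, Pi.smul_apply, smul_eq_mul] at this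
    exact mul_right_cancel₀ hk this
  -- row sums of A
  have hrow : ∀ k, ∑ w ∈ Finset.univ.erase k, ‖A k w‖ = (δ : ℝ) := by
    intro k
    have h0 : ∀ w, ‖A k w‖ = A k w := by
      intro w
      rw [Real.norm_eq_abs, abs_of_nonneg]
      simp only [hAdef, SimpleGraph.adjMatrix_apply]
      split <;> norm_num
    rw [Finset.sum_congr rfl (fun w _ => h0 w),
      Finset.sum_erase _ (by simp [hAdef] : A k k = 0)]
    have h2 := congrFun hones k
    simpa [Matrix.mulVec, dotProduct, Function.const] using h2
  -- θ 0 ≤ δ via Gershgorin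
  have hθ0le : θ 0 ≤ (δ : ℝ) := by
    obtain ⟨l₀, hl₀⟩ := hθμ 0
    have hsp : θ 0 ∈ spectrum ℝ A := by
      rw [← hl₀, hμdef]
      exact hA.eigenvalues_mem_spectrum_real l₀
    rw [← AlgEquiv.spectrum_eq (Matrix.toLinAlgEquiv <| Pi.basisFun ℝ (Fin n)) A] at hsp
    have heig : Module.End.HasEigenvalue (Matrix.toLin' A) (θ 0) :=
      Module.End.HasEigenvalue.of_mem_spectrum hsp
    obtain ⟨k, hk⟩ := eigenvalue_mem_ball heig
    rw [Metric.mem_closedBall, hrow k] at hk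
    have hAkk : A k k = 0 := by simp [hAdef]
    rw [hAkk] at hk
    have : |θ 0| ≤ (δ : ℝ) := by simpa [Real.dist_eq] using hk
    exact (abs_le.mp this).2
  have hδθ0 : (δ : ℝ) = θ 0 := by
    obtain ⟨k, hk⟩ := hδmem
    obtain ⟨m, hm⟩ := hμθ k
    have h1 : (δ : ℝ) = θ m := by rw [← hk, hm]
    have h2 : θ m ≤ θ 0 := hθ.antitone (Fin.zero_le m)
    linarith
  -- quadratic nonnegativity
  have hji : j < i := by rw [Fin.lt_def]; omega
  have hpθ : ∀ m : Fin (d + 1), 0 ≤ (θ m - θ i) * (θ m - θ j) := by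
    intro m
    rcases le_or_gt (m : ℕ) (j : ℕ) with h | h
    · have h1 : θ j ≤ θ m := hθ.antitone (by rwa [Fin.le_def])
      have h2 : θ i < θ j := hθ hji
      exact mul_nonneg (by linarith) (by linarith)
    · have h1 : θ m ≤ θ i := hθ.antitone (by rw [Fin.le_def]; omega)
      have h2 : θ i < θ j := hθ hji
      nlinarith
  have hpμ : ∀ l : Fin n, 0 ≤ μ l * μ l - (θ i + θ j) * μ l + θ i * θ j := by
    intro l
    obtain ⟨m, hm⟩ := hμθ l
    rw [hm]
    nlinarith [hpθ m]
  set M : Matrix (Fin n) (Fin n) ℝ :=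
    A * A - (θ i + θ j) • A + (θ i * θ j) • (1 : Matrix (Fin n) (Fin n) ℝ) with hMdef
  have hMconj : M = V * diagonal (fun l => μ l * μ l - (θ i + θ j) * μ l + θ i * θ j) * star V :=
    conj_quad hV1 hV2 hspec _ _
  rcases Nat.eq_zero_or_pos (j : ℕ) with hj0 | hjpos
  · -- case j = 0 : contradiction via trace
    have hj0' : j = 0 := by
      apply Fin.ext
      simpa using hj0
    have htrA : Matrix.trace A = 0 := by simp [hAdef]
    have htrA2 : Matrix.trace (A * A) = (n : ℝ) * (δ : ℝ) := by
      have hdiag : ∀ k, (A * A) k k = (δ : ℝ) := by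
        intro k
        rw [hAdef, SimpleGraph.adjMatrix_mul_self_apply_self]
        simp [hreg k]
      rw [Matrix.trace]
      have : ∀ k ∈ Finset.univ, Matrix.diag (A * A) k = (δ : ℝ) := fun k _ => hdiag k
      rw [Finset.sum_congr rfl this]
      simp [Finset.card_univ, mul_comm]
    have htr1 : Matrix.trace M = (n : ℝ) * (δ : ℝ) + (θ i * θ j) * (n : ℝ) := by
      rw [hMdef, Matrix.trace_add, Matrix.trace_sub, Matrix.trace_smul, Matrix.trace_smul,
        Matrix.trace_one, htrA, htrA2]
      simp [Finset.card_univ, smul_eq_mul]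
    have htr2 : Matrix.trace M = ∑ l, (μ l * μ l - (θ i + θ j) * μ l + θ i * θ j) := by
      rw [hMconj, Matrix.trace_mul_cycle, hV1, one_mul, Matrix.trace_diagonal]
    obtain ⟨l₂, hl₂⟩ := hθμ ⟨2, by omega⟩
    have hpos : 0 < ∑ l, (μ l * μ l - (θ i + θ j) * μ l + θ i * θ j) := by
      apply Finset.sum_pos' (fun l _ => hpμ l) ⟨l₂, Finset.mem_univ _, ?_⟩
      rw [hl₂]
      have h20 : θ (⟨2, by omega⟩ : Fin (d + 1)) < θ 0 := by
        apply hθ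
        rw [Fin.lt_def]
        simp
      have h2i : θ (⟨2, by omega⟩ : Fin (d + 1)) < θ i := by
        apply hθ
        rw [Fin.lt_def]
        show (i : ℕ) < 2
        omega
      have hθj0 : θ j = θ 0 := by rw [hj0']
      nlinarith [mul_pos (sub_pos.2 h2i) (sub_pos.2 h20)]
    have hθ0nn : (0:ℝ) ≤ θ 0 := by
      rw [← hδθ0]
      positivity
    have hθj0 : θ j = θ 0 := by rw [hj0']
    have hnn : (0:ℝ) ≤ (n:ℝ) := Nat.cast_nonneg n
    have hle : Matrix.trace M ≤ 0 := by
      rw [htr1, hδθ0, hθj0]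
      nlinarith [mul_nonneg (mul_nonneg hnn hθ0nn) (neg_nonneg.mpr (by linarith : 1 + θ i ≤ 0))]
    rw [htr2] at hle
    linarith
  · -- main case : j ≥ 1
    have hMpsd : M.PosSemidef := by
      rw [hMconj]
      exact (Matrix.PosSemidef.diagonal (fun l => hpμ l)).mul_mul_conjTranspose_same V
    set o : Fin n → ℝ := Function.const (Fin n) 1 with hodef
    set x : Fin n → ℝ := Pi.single u 1 + Pi.single v 1 with hxdef
    have hMe : ∀ a b : Fin n, M a b
        = (A * A) a b - (θ i + θ j) * A a b + (θ i * θ j) * (1 : Matrix (Fin n) (Fin n) ℝ) a b := by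
      intro a b
      simp [hMdef, Matrix.sub_apply, Matrix.add_apply, Matrix.smul_apply, smul_eq_mul]
    have hA2uu : ∀ w : Fin n, (A * A) w w = (δ : ℝ) := by
      intro w
      rw [hAdef, SimpleGraph.adjMatrix_mul_self_apply_self]
      simp [hreg w]
    have hA2uv : (A * A) u v = 0 := by
      rw [hAdef, SimpleGraph.adjMatrix_mul_apply]
      apply Finset.sum_eq_zero
      intro w hw
      rw [SimpleGraph.mem_neighborFinset] at hw
      simp only [SimpleGraph.adjMatrix_apply, ite_eq_right_iff]
      intro hwv
      exact absurd ⟨hw, hwv⟩ (hcommon w)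
    have hA2vu : (A * A) v u = 0 := by
      rw [hAdef, SimpleGraph.adjMatrix_mul_apply]
      apply Finset.sum_eq_zero
      intro w hw
      rw [SimpleGraph.mem_neighborFinset] at hw
      simp only [SimpleGraph.adjMatrix_apply, ite_eq_right_iff]
      intro hwu
      exact absurd ⟨hwu.symm, hw.symm⟩ (hcommon w)
    have hAuv : A u v = 0 := by simp [hAdef, SimpleGraph.adjMatrix_apply, hadj]
    have hAvu : A v u = 0 := by
      simp only [hAdef, SimpleGraph.adjMatrix_apply, ite_eq_right_iff]
      intro h
      exact absurd h.symm hadj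
    have hAuu : A u u = 0 := by simp [hAdef]
    have hAvv : A v v = 0 := by simp [hAdef]
    have h1uv : (1 : Matrix (Fin n) (Fin n) ℝ) u v = 0 := Matrix.one_apply_ne huv
    have h1vu : (1 : Matrix (Fin n) (Fin n) ℝ) v u = 0 := Matrix.one_apply_ne huv.symm
    have hS : x ⬝ᵥ (M *ᵥ x) = 2 * ((δ : ℝ) + θ i * θ j) := by
      have hexp : x ⬝ᵥ (M *ᵥ x) = M u u + M u v + (M v u + M v v) := by
        simp only [hxdef, Matrix.mulVec_add, Matrix.mulVec_single_one, add_dotProduct,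
          dotProduct_add, single_dotProduct, Matrix.col_apply, Pi.add_apply, mul_one, one_mul]
        ring
      rw [hexp, hMe, hMe, hMe, hMe, hA2uu u, hA2uu v, hA2uv, hA2vu, hAuv, hAvu, hAuu, hAvv,
        h1uv, h1vu, Matrix.one_apply_eq, Matrix.one_apply_eq]
      ring
    have hδr : (0:ℝ) < (n:ℝ) := by exact_mod_cast hn
    set pδ : ℝ := ((δ : ℝ) - θ i) * ((δ : ℝ) - θ j) with hpδdef
    have hMo : M *ᵥ o = pδ • o := by
      rw [hMdef, Matrix.add_mulVec, Matrix.sub_mulVec, Matrix.smul_mulVec,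
        Matrix.smul_mulVec, Matrix.one_mulVec, ← Matrix.mulVec_mulVec, hones,
        Matrix.mulVec_smul, hones]
      funext w
      simp only [Pi.add_apply, Pi.sub_apply, Pi.smul_apply, smul_eq_mul, hodef,
        Function.const_apply, hpδdef]
      ring
    have hxo : o ⬝ᵥ x = 2 := by
      rw [hodef, hxdef, dotProduct_add, dotProduct_single, dotProduct_single]
      norm_num
    have hoo : o ⬝ᵥ o = (n : ℝ) := by
      simp [hodef, dotProduct, Function.const]
    set z : Fin n → ℝ := x - (2 / (n:ℝ)) • o with hzdef
    have hoz : o ⬝ᵥ z = 0 := by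
      rw [hzdef, dotProduct_sub, dotProduct_smul, hoo, hxo, smul_eq_mul]
      field_simp
      ring
    have hzMo : z ⬝ᵥ (M *ᵥ o) = 0 := by
      rw [hMo, dotProduct_smul, dotProduct_comm, hoz]
      simp
    have hMT : Mᵀ = M := by
      rw [hMdef]
      simp only [Matrix.transpose_add, Matrix.transpose_sub, Matrix.transpose_smul,
        Matrix.transpose_mul, Matrix.transpose_one, hAdef, SimpleGraph.transpose_adjMatrix]
    have hoMz : o ⬝ᵥ (M *ᵥ z) = 0 := by
      rw [Matrix.dotProduct_mulVec, ← Matrix.mulVec_transpose, hMT, hMo,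
        smul_dotProduct, hoz]
      simp
    have hzMz : 0 ≤ z ⬝ᵥ (M *ᵥ z) := by
      have h := hMpsd.dotProduct_mulVec_nonneg z
      simpa using h
    have hoMo : o ⬝ᵥ (M *ᵥ o) = pδ * (n : ℝ) := by
      rw [hMo, dotProduct_smul, hoo]
      simp
    have hxz : x = z + (2 / (n:ℝ)) • o := by
      rw [hzdef]
      abel
    have hSdec : x ⬝ᵥ (M *ᵥ x)
        = z ⬝ᵥ (M *ᵥ z) + (2 / (n:ℝ)) * ((2 / (n:ℝ)) * (pδ * (n:ℝ))) := by
      rw [hxz, Matrix.mulVec_add, Matrix.mulVec_smul, add_dotProduct, dotProduct_add,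
        dotProduct_add, smul_dotProduct, smul_dotProduct,
        dotProduct_smul, dotProduct_smul, hzMo, hoMz, hoMo]
      simp only [smul_eq_mul]
      ring
    -- the key inequality
    have hkey : 4 * pδ / (n:ℝ) ≤ 2 * ((δ : ℝ) + θ i * θ j) := by
      rw [← hS, hSdec]
      have : (2 / (n:ℝ)) * ((2 / (n:ℝ)) * (pδ * (n:ℝ))) = 4 * pδ / (n:ℝ) := by
        field_simp
        ring
      rw [this]
      linarith
    have hipos : (0:ℕ) < (i : ℕ) := by omega
    have h0i : θ i < θ 0 := by
      apply hθ
      rw [Fin.lt_def]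
      simpa using hipos
    have h0j : θ j < θ 0 := by
      apply hθ
      rw [Fin.lt_def]
      simpa using hjpos
    have hpδpos : 0 < (θ 0 - θ i) * (θ 0 - θ j) :=
      mul_pos (by linarith) (by linarith)
    have hpδeq : pδ = (θ 0 - θ i) * (θ 0 - θ j) := by rw [hpδdef, hδθ0]
    have hcontra : (2:ℝ) ≤ (n:ℝ) * (θ 0 + θ i * θ j) / ((θ 0 - θ i) * (θ 0 - θ j)) := by
      rw [le_div_iff₀ hpδpos]
      rw [hδθ0, hpδeq] at hkey
      rw [div_le_iff₀ hδr] at hkey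
      linarith [hkey]
    linarith [hcontra, hbound]
end

section
/- Let G be a graph on n vertices with eigenvalues λ₁ ≥ ⋯ ≥ λₙ and α its independence number. Then α ≤ min(|{i : λᵢ ≥ 0}|, |{i : λᵢ ≤ 0}|). -/
open Matrix Finset
open scoped Classical RealInnerProductSpace

lemma card_filter_comp_perm {n : ℕ} (σ : Equiv.Perm (Fin n)) (p : Fin n → Prop) :
    (Finset.univ.filter fun i => p (σ i)).card = (Finset.univ.filter p).card := by
  apply Finset.card_bij (fun i _ => σ i)
  · intro a ha; simp_all
  · intro a _ b _ h; exact σ.injective h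
  · intro b hb; exact ⟨σ.symm b, by simp_all, by simp⟩

lemma aux_indep {n : ℕ} (G : SimpleGraph (Fin n))
    (hA : (G.adjMatrix ℝ).IsHermitian)
    (s : Finset (Fin n)) (hs : ∀ u ∈ s, ∀ v ∈ s, u ≠ v → ¬ G.Adj u v)
    (ε : ℝ) (T : Finset (Fin n)) (hT : ∀ i ∈ T, 0 < ε * hA.eigenvalues i) :
    s.card + T.card ≤ n := by
  by_contra hlt
  push_neg at hlt
  set B := hA.eigenvectorBasis with hB
  set f : Fin n → EuclideanSpace ℝ (Fin n) := fun i => EuclideanSpace.single i (1:ℝ) with hf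
  set U : Submodule ℝ (EuclideanSpace ℝ (Fin n)) := Submodule.span ℝ (f '' ↑s) with hUdef
  set W : Submodule ℝ (EuclideanSpace ℝ (Fin n)) := Submodule.span ℝ (⇑B '' ↑T) with hWdef
  have honf : Orthonormal ℝ f := by
    have := (EuclideanSpace.basisFun (Fin n) ℝ).orthonormal
    convert this using 1
    case e'_4 => rfl
    ext i
    simp [hf, EuclideanSpace.basisFun_apply]
  have hU : Module.finrank ℝ U = s.card := by
    have h1 : LinearIndependent ℝ (fun i : s => f i) :=
      (honf.comp Subtype.val Subtype.val_injective).linearIndependent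
    have := finrank_span_eq_card h1
    rw [Fintype.card_coe] at this
    rw [show (Set.range fun i : ↥s => f ↑i) = f '' ↑s from by ext y; simp] at this
    rw [hUdef]; exact this
  have hW : Module.finrank ℝ W = T.card := by
    have h1 : LinearIndependent ℝ (fun i : T => B i) :=
      (B.orthonormal.comp Subtype.val Subtype.val_injective).linearIndependent
    have := finrank_span_eq_card h1
    rw [Fintype.card_coe] at this
    rw [show (Set.range fun i : ↥T => B ↑i) = ⇑B '' ↑T from by ext y; simp] at this
    rw [hWdef]; exact this
  -- dimension count
  have hdim : 0 < Module.finrank ℝ ↥(U ⊓ W) := by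
    have h1 := Submodule.finrank_sup_add_finrank_inf_eq U W
    have h2 : Module.finrank ℝ ↥(U ⊔ W) ≤ n := by
      have := Submodule.finrank_le (U ⊔ W)
      simpa using this
    omega
  have hne : U ⊓ W ≠ ⊥ := by
    intro h
    rw [h] at hdim
    simp [finrank_bot] at hdim
  obtain ⟨x, hx, hxne⟩ := Submodule.exists_mem_ne_zero_of_ne_bot hne
  obtain ⟨hxU, hxW⟩ := Submodule.mem_inf.mp hx
  -- x is supported on s
  have hsupp : ∀ i ∉ s, x i = 0 := by
    have key : ∀ y ∈ U, ∀ i ∉ s, y i = 0 := by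
      intro y hy
      refine Submodule.span_induction ?_ ?_ ?_ ?_ hy
      · rintro y ⟨j, hj, rfl⟩ i hi
        have hij : i ≠ j := fun h => hi (h ▸ hj)
        simp [hf, EuclideanSpace.single_apply, hij]
      · intro i _; rfl
      · intro y z _ _ hy hz i hi
        have : (y + z) i = y i + z i := rfl
        rw [this, hy i hi, hz i hi, add_zero]
      · intro a y _ hy i hi
        have : (a • y) i = a * y i := rfl
        rw [this, hy i hi, mul_zero]
    exact key x hxU
  set c : Fin n → ℝ := fun j => ⟪B j, x⟫ with hc
  -- coefficients outside T vanish
  have hcoef : ∀ j ∉ T, c j = 0 := by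
    intro j hj
    have key : ∀ y ∈ W, ⟪B j, y⟫ = 0 := by
      intro y hy
      refine Submodule.span_induction ?_ ?_ ?_ ?_ hy
      · rintro y ⟨i, hi, rfl⟩
        exact B.orthonormal.2 (fun h => hj (h ▸ hi))
      · simp
      · intro y z _ _ hy hz; rw [inner_add_right, hy, hz, add_zero]
      · intro a y _ hy; rw [inner_smul_right, hy, mul_zero]
    exact key x hxW
  set L := Matrix.toEuclideanLin (G.adjMatrix ℝ) with hL
  have hLB : ∀ j, L (B j) = hA.eigenvalues j • B j := by
    intro j
    have h1 := hA.mulVec_eigenvectorBasis j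
    ext u
    have := congrFun h1 u
    simpa [hL, Matrix.toEuclideanLin_apply] using this
  have hxr : ∑ j, c j • B j = x := B.sum_repr' x
  -- quadratic form in eigenbasis
  have hq1 : ⟪x, L x⟫ = ∑ j, hA.eigenvalues j * c j ^ 2 := by
    have h2 : L x = ∑ j, (hA.eigenvalues j * c j) • B j := by
      conv_lhs => rw [← hxr]
      rw [map_sum]
      refine Finset.sum_congr rfl fun j _ => ?_
      rw [_root_.map_smul, hLB j, smul_smul, mul_comm]
    rw [h2, inner_sum]
    refine Finset.sum_congr rfl fun j _ => ?_
    rw [real_inner_smul_right]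
    have h3 : (inner ℝ x (B j) : ℝ) = c j := by
      rw [hc]; exact real_inner_comm _ _
    rw [h3]; ring
  -- quadratic form vanishes on vectors supported on an independent set
  have hq0 : ⟪x, L x⟫ = 0 := by
    have hinner : ⟪x, L x⟫ = ∑ u, x u * (G.adjMatrix ℝ *ᵥ (fun v => x v)) u := by
      simp [PiLp.inner_apply, hL, Matrix.toEuclideanLin_apply]
      exact Finset.sum_congr rfl fun _ _ => mul_comm _ _
    rw [hinner]
    refine Finset.sum_eq_zero fun u _ => ?_
    rcases em (u ∈ s) with hu | hu
    · rw [Matrix.mulVec, dotProduct]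
      rw [Finset.mul_sum]
      refine Finset.sum_eq_zero fun v _ => ?_
      rcases em (v ∈ s) with hv | hv
      · rcases em (u = v) with rfl | huv
        · simp
        · have : ¬ G.Adj u v := hs u hu v hv huv
          simp [this]
      · rw [hsupp v hv]; ring
    · rw [hsupp u hu]; ring
  have hsum : ∑ j, (ε * hA.eigenvalues j) * c j ^ 2 = 0 := by
    have : ∑ j, (ε * hA.eigenvalues j) * c j ^ 2
        = ε * ∑ j, hA.eigenvalues j * c j ^ 2 := by
      rw [Finset.mul_sum]; refine Finset.sum_congr rfl fun j _ => by ring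
    rw [this, ← hq1, hq0, mul_zero]
  have hterm : ∀ j ∈ (Finset.univ : Finset (Fin n)), 0 ≤ (ε * hA.eigenvalues j) * c j ^ 2 := by
    intro j _
    rcases em (j ∈ T) with hj | hj
    · exact mul_nonneg (hT j hj).le (sq_nonneg _)
    · rw [hcoef j hj]; simp
  have hzero : ∀ j, c j = 0 := by
    intro j
    rcases em (j ∈ T) with hj | hj
    · have h0 := (Finset.sum_eq_zero_iff_of_nonneg hterm).mp hsum j (Finset.mem_univ j)
      have hpos := hT j hj
      have hsq : c j ^ 2 = 0 := by
        rcases mul_eq_zero.mp h0 with h | h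
        · exact absurd h hpos.ne'
        · exact h
      exact pow_eq_zero_iff two_ne_zero |>.mp hsq
    · exact hcoef j hj
  apply hxne
  rw [← hxr]
  refine Finset.sum_eq_zero fun j _ => ?_
  rw [hzero j, zero_smul]


/-- The independence number: maximum size of a set of pairwise non-adjacent vertices. -/
noncomputable def indepNum' {n : ℕ} (G : SimpleGraph (Fin n)) : ℕ :=
  sSup {m | ∃ s : Finset (Fin n),
    (∀ u ∈ s, ∀ v ∈ s, u ≠ v → ¬ G.Adj u v) ∧ s.card = m}

theorem stmt_19 {n : ℕ} (G : SimpleGraph (Fin n))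
    (hA : (G.adjMatrix ℝ).IsHermitian)
    (eig : Fin n → ℝ) (hmono : Antitone eig)
    (hperm : ∃ σ : Equiv.Perm (Fin n), eig = hA.eigenvalues ∘ σ) :
    indepNum' G ≤
      min (Finset.univ.filter (fun i : Fin n => 0 ≤ eig i)).card
        (Finset.univ.filter (fun i : Fin n => eig i ≤ 0)).card := by
  obtain ⟨σ, rfl⟩ := hperm
  have e1 : (Finset.univ.filter (fun i : Fin n => 0 ≤ (hA.eigenvalues ∘ σ) i)).card
      = (Finset.univ.filter (fun i : Fin n => 0 ≤ hA.eigenvalues i)).card := by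
    exact card_filter_comp_perm σ (fun t => 0 ≤ hA.eigenvalues t)
  have e2 : (Finset.univ.filter (fun i : Fin n => (hA.eigenvalues ∘ σ) i ≤ 0)).card
      = (Finset.univ.filter (fun i : Fin n => hA.eigenvalues i ≤ 0)).card := by
    exact card_filter_comp_perm σ (fun t => hA.eigenvalues t ≤ 0)
  rw [e1, e2]
  refine csSup_le ⟨0, ∅, by simp, rfl⟩ ?_
  rintro m ⟨s, hs, rfl⟩
  refine le_min ?_ ?_
  · have h := aux_indep G hA s hs (-1) (Finset.univ.filter fun i => hA.eigenvalues i < 0)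
      (by intro i hi; simp only [Finset.mem_filter] at hi; nlinarith [hi.2])
    have hpart := Finset.card_filter_add_card_filter_not
      (s := (Finset.univ : Finset (Fin n))) (p := fun i => 0 ≤ hA.eigenvalues i)
    have heq : (Finset.univ.filter fun i : Fin n => ¬ 0 ≤ hA.eigenvalues i)
        = Finset.univ.filter fun i => hA.eigenvalues i < 0 := by
      apply Finset.filter_congr; intro i _; simp [not_le]
    rw [heq, Finset.card_univ, Fintype.card_fin] at hpart
    omega
  · have h := aux_indep G hA s hs 1 (Finset.univ.filter fun i => 0 < hA.eigenvalues i)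
      (by intro i hi; simp only [Finset.mem_filter] at hi; nlinarith [hi.2])
    have hpart := Finset.card_filter_add_card_filter_not
      (s := (Finset.univ : Finset (Fin n))) (p := fun i => hA.eigenvalues i ≤ 0)
    have heq : (Finset.univ.filter fun i : Fin n => ¬ hA.eigenvalues i ≤ 0)
        = Finset.univ.filter fun i => 0 < hA.eigenvalues i := by
      apply Finset.filter_congr; intro i _; simp [not_le]
    rw [heq, Finset.card_univ, Fintype.card_fin] at hpart
    omega
end
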